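/- arXiv:1906.01866 — 8 statements merged into one kernel-verified Lean document; each statement's English description precedes it below -/
import Mathlib

section
/- Let Ω ⊂ ℝⁿ be a bounded domain, let φ ∈ Φ_w(Ω) and define ψ(x,t) := φ(x,t) + t. If φ satisfies (aDec)_q^∞ and (A0), then ψ satisfies (aDec)_q, with constant depending only on q and the constants in (aDec)_q^∞, (A0) and the (aInc)_1 property of φ. -/
open MeasureTheory Set Filter ENNReal NNReal Metric

noncomputable section

/-- `Ω` is a bounded domain (open, connected, bounded). -/
def BoundedDomain {n : ℕ} (Ω : Set (Fin n → ℝ)) : Prop :=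
  IsOpen Ω ∧ IsConnected Ω ∧ Bornology.IsBounded Ω

/-- `φ : Ω × [0,∞) → [0,∞]` is a Φ-prefunction. -/
def PhiPrefun {n : ℕ} (Ω : Set (Fin n → ℝ)) (φ : (Fin n → ℝ) → ℝ≥0 → ℝ≥0∞) : Prop :=
  (∀ t : ℝ≥0, Measurable fun x => φ x t) ∧
  (∀ x ∈ Ω, Monotone (φ x)) ∧
  (∀ x ∈ Ω, φ x 0 = 0) ∧
  (∀ x ∈ Ω, Tendsto (φ x) (nhdsWithin 0 (Ioi 0)) (nhds 0)) ∧
  (∀ x ∈ Ω, Tendsto (φ x) atTop (nhds ⊤))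

/-- `(aInc)_p` with constant `L` for every `x ∈ Ω`:
`t ↦ φ(x,t)/t^p` is `L`-almost increasing on `(0,∞)`. -/
def PhiAInc {n : ℕ} (Ω : Set (Fin n → ℝ)) (φ : (Fin n → ℝ) → ℝ≥0 → ℝ≥0∞)
    (p : ℝ) (L : ℝ≥0) : Prop :=
  ∀ x ∈ Ω, ∀ s t : ℝ≥0, 0 < s → s ≤ t →
    φ x s / (s : ℝ≥0∞) ^ p ≤ L * (φ x t / (t : ℝ≥0∞) ^ p)

/-- `φ` is a weak Φ-function on `Ω` with `(aInc)_1` constant `L`. -/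
def IsWeakPhi {n : ℕ} (Ω : Set (Fin n → ℝ)) (φ : (Fin n → ℝ) → ℝ≥0 → ℝ≥0∞)
    (L : ℝ≥0) : Prop :=
  PhiPrefun Ω φ ∧ 1 ≤ L ∧ PhiAInc Ω φ 1 L ∧
  ∀ x ∈ Ω, ∀ t : ℝ≥0, Tendsto (φ x) (nhdsWithin t (Iio t)) (nhds (φ x t))

/-- `(A0)` with constant `β`: `φ(x,β) ≤ 1 ≤ φ(x,1/β)` for a.e. `x ∈ Ω`. -/
def PhiA0 {n : ℕ} (Ω : Set (Fin n → ℝ)) (φ : (Fin n → ℝ) → ℝ≥0 → ℝ≥0∞)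
    (β : ℝ≥0) : Prop :=
  ∀ᵐ x ∂(volume : Measure (Fin n → ℝ)), x ∈ Ω → φ x β ≤ 1 ∧ 1 ≤ φ x β⁻¹

/-- `(aDec)_q` with constant `L`: `t ↦ φ(x,t)/t^q` is `L`-almost decreasing
on `(0,∞)` for a.e. `x ∈ Ω`. -/
def PhiADec {n : ℕ} (Ω : Set (Fin n → ℝ)) (φ : (Fin n → ℝ) → ℝ≥0 → ℝ≥0∞)
    (q : ℝ) (L : ℝ≥0) : Prop :=
  ∀ᵐ x ∂(volume : Measure (Fin n → ℝ)), x ∈ Ω → ∀ s t : ℝ≥0, 0 < s → s ≤ t →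
    φ x t / (t : ℝ≥0∞) ^ q ≤ L * (φ x s / (s : ℝ≥0∞) ^ q)

/-- `(aDec)_q^∞` with constant `L`: `t ↦ (φ(x,t)+1)/t^q` is `L`-almost decreasing
on `(0,∞)` for a.e. `x ∈ Ω`. -/
def PhiADecInf {n : ℕ} (Ω : Set (Fin n → ℝ)) (φ : (Fin n → ℝ) → ℝ≥0 → ℝ≥0∞)
    (q : ℝ) (L : ℝ≥0) : Prop :=
  ∀ᵐ x ∂(volume : Measure (Fin n → ℝ)), x ∈ Ω → ∀ s t : ℝ≥0, 0 < s → s ≤ t →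
    (φ x t + 1) / (t : ℝ≥0∞) ^ q ≤ L * ((φ x s + 1) / (s : ℝ≥0∞) ^ q)

/-- The left-inverse `φ⁻¹(x,τ) = inf {t ≥ 0 : φ(x,t) ≥ τ}`. -/
def phiInv {n : ℕ} (φ : (Fin n → ℝ) → ℝ≥0 → ℝ≥0∞) (x : Fin n → ℝ) (τ : ℝ≥0∞) : ℝ≥0∞ :=
  sInf ((fun t : ℝ≥0 => (t : ℝ≥0∞)) '' {t : ℝ≥0 | τ ≤ φ x t})

/-- `(A1)` with constant `β`: for every ball `B` and a.e. `x, y ∈ B ∩ Ω`,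
`β φ⁻¹(x,τ) ≤ φ⁻¹(y,τ)` for all `τ ∈ [1, 1/|B|]`. -/
def PhiA1 {n : ℕ} (Ω : Set (Fin n → ℝ)) (φ : (Fin n → ℝ) → ℝ≥0 → ℝ≥0∞)
    (β : ℝ≥0) : Prop :=
  ∀ (z : Fin n → ℝ) (ρ : ℝ), 0 < ρ →
    ∀ᵐ x ∂(volume : Measure (Fin n → ℝ)), ∀ᵐ y ∂(volume : Measure (Fin n → ℝ)),
      x ∈ Metric.ball z ρ ∩ Ω → y ∈ Metric.ball z ρ ∩ Ω →
      ∀ τ : ℝ≥0∞, 1 ≤ τ → τ ≤ (volume (Metric.ball z ρ))⁻¹ →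
        (β : ℝ≥0∞) * phiInv φ x τ ≤ phiInv φ y τ

/-- `(A1-n)` with constant `β`: for every ball `B` and a.e. `x, y ∈ B ∩ Ω`,
`φ(x,βt) ≤ φ(y,t)` for all `t ∈ [1, |B|^{-1/n}]`. -/
def PhiA1n {n : ℕ} (Ω : Set (Fin n → ℝ)) (φ : (Fin n → ℝ) → ℝ≥0 → ℝ≥0∞)
    (β : ℝ≥0) : Prop :=
  ∀ (z : Fin n → ℝ) (ρ : ℝ), 0 < ρ →
    ∀ᵐ x ∂(volume : Measure (Fin n → ℝ)), ∀ᵐ y ∂(volume : Measure (Fin n → ℝ)),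
      x ∈ Metric.ball z ρ ∩ Ω → y ∈ Metric.ball z ρ ∩ Ω →
      ∀ t : ℝ≥0, 1 ≤ t → (t : ℝ≥0∞) ≤ (volume (Metric.ball z ρ)) ^ (-(1 / (n : ℝ))) →
        φ x (β * t) ≤ φ y t


lemma tdiv_le (q : ℝ) (hq : 1 ≤ q) {s t : ℝ≥0} (hs : 0 < s) (hst : s ≤ t) :
    (t : ℝ≥0∞) / (t : ℝ≥0∞) ^ q ≤ (s : ℝ≥0∞) / (s : ℝ≥0∞) ^ q := by
  have ht : 0 < t := hs.trans_le hst
  have key : ∀ u : ℝ≥0, 0 < u →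
      (u : ℝ≥0∞) / (u : ℝ≥0∞) ^ q = ((u : ℝ≥0∞) ^ (q - 1))⁻¹ := by
    intro u hu
    have h1 : (u : ℝ≥0∞) ^ ((1:ℝ) - q) = (u : ℝ≥0∞) ^ (1:ℝ) / (u : ℝ≥0∞) ^ q :=
      ENNReal.rpow_sub _ _ (by exact_mod_cast hu.ne') ENNReal.coe_ne_top
    rw [ENNReal.rpow_one] at h1
    rw [← h1, show (1 : ℝ) - q = -(q - 1) by ring, ENNReal.rpow_neg]
  rw [key s hs, key t ht]
  exact ENNReal.inv_le_inv.2 (ENNReal.rpow_le_rpow (by exact_mod_cast hst) (by linarith))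

lemma caseA (q : ℝ) (hq : 1 ≤ q) (β L : ℝ≥0) (hβ0 : 0 < β)
    (f : ℝ≥0 → ℝ≥0∞)
    (hinc : ∀ s t : ℝ≥0, 0 < s → s ≤ t → f s / (s:ℝ≥0∞) ≤ L * (f t / (t:ℝ≥0∞)))
    (hA0 : f β ≤ 1) :
    ∀ s t : ℝ≥0, 0 < s → s ≤ t → t ≤ β →
      (f t + t)/(t:ℝ≥0∞)^q ≤ (L*β⁻¹+1 : ℝ≥0) * ((f s + s)/(s:ℝ≥0∞)^q) := by
  intro s t hs hst htβ
  have ht : 0 < t := hs.trans_le hst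
  have h1 : f t / (t:ℝ≥0∞) ≤ ((L*β⁻¹ : ℝ≥0) : ℝ≥0∞) := by
    calc f t / (t:ℝ≥0∞) ≤ L * (f β / (β:ℝ≥0∞)) := hinc t β ht htβ
    _ ≤ L * (1 / (β:ℝ≥0∞)) := by gcongr
    _ = ((L*β⁻¹ : ℝ≥0) : ℝ≥0∞) := by
        rw [one_div, ← ENNReal.coe_inv hβ0.ne', ← ENNReal.coe_mul]
  have h2 : f t ≤ ((L*β⁻¹ : ℝ≥0) : ℝ≥0∞) * t := by
    rw [ENNReal.div_le_iff (by exact_mod_cast ht.ne') ENNReal.coe_ne_top] at h1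
    exact h1
  have h3 : f t + t ≤ ((L*β⁻¹+1 : ℝ≥0) : ℝ≥0∞) * t := by
    push_cast
    rw [add_mul, one_mul]
    exact add_le_add_left h2 _
  calc (f t + t)/(t:ℝ≥0∞)^q
      ≤ (((L*β⁻¹+1 : ℝ≥0) : ℝ≥0∞) * t)/(t:ℝ≥0∞)^q := ENNReal.div_le_div_right h3 _
    _ = ((L*β⁻¹+1 : ℝ≥0) : ℝ≥0∞) * ((t:ℝ≥0∞)/(t:ℝ≥0∞)^q) := mul_div_assoc _ _ _
    _ ≤ ((L*β⁻¹+1 : ℝ≥0) : ℝ≥0∞) * ((s:ℝ≥0∞)/(s:ℝ≥0∞)^q) :=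
        mul_le_mul_right (tdiv_le q hq hs hst) _
    _ ≤ (L*β⁻¹+1 : ℝ≥0) * ((f s + s)/(s:ℝ≥0∞)^q) := by
        gcongr; exact le_add_self

lemma caseB (q : ℝ) (hq : 1 ≤ q) (β L₁ : ℝ≥0) (hβ0 : 0 < β) (hβ1 : β ≤ 1)
    (f : ℝ≥0 → ℝ≥0∞)
    (hdec : ∀ s t : ℝ≥0, 0 < s → s ≤ t →
      (f t + 1)/(t:ℝ≥0∞)^q ≤ L₁ * ((f s + 1)/(s:ℝ≥0∞)^q)) :
    ∀ s t : ℝ≥0, β ≤ s → s ≤ t →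
      (f t + t)/(t:ℝ≥0∞)^q ≤ (L₁*β⁻¹+1 : ℝ≥0) * ((f s + s)/(s:ℝ≥0∞)^q) := by
  intro s t hβs hst
  have hs : 0 < s := hβ0.trans_le hβs
  have hβinv : (1:ℝ≥0) ≤ β⁻¹ := (one_le_inv₀ hβ0).2 hβ1
  have hnum : f s + 1 ≤ ((β⁻¹ : ℝ≥0) : ℝ≥0∞) * (f s + s) := by
    rw [mul_add]
    refine add_le_add ?_ ?_
    · exact le_mul_of_one_le_left zero_le (by exact_mod_cast hβinv)
    · rw [← ENNReal.coe_mul]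
      exact_mod_cast (le_inv_mul_iff₀ hβ0).2 (by simpa using hβs)
  have h1 : f t / (t:ℝ≥0∞)^q ≤ ((L₁*β⁻¹ : ℝ≥0) : ℝ≥0∞) * ((f s + s)/(s:ℝ≥0∞)^q) := by
    calc f t / (t:ℝ≥0∞)^q ≤ (f t + 1)/(t:ℝ≥0∞)^q :=
          ENNReal.div_le_div_right (le_add_right le_rfl) _
      _ ≤ L₁ * ((f s + 1)/(s:ℝ≥0∞)^q) := hdec s t hs hst
      _ ≤ L₁ * ((((β⁻¹:ℝ≥0):ℝ≥0∞) * (f s + s))/(s:ℝ≥0∞)^q) := by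
          gcongr
      _ = ((L₁*β⁻¹ : ℝ≥0) : ℝ≥0∞) * ((f s + s)/(s:ℝ≥0∞)^q) := by
          rw [mul_div_assoc, ← mul_assoc, ← ENNReal.coe_mul]
  have h2 : (t:ℝ≥0∞) / (t:ℝ≥0∞)^q ≤ (f s + s)/(s:ℝ≥0∞)^q :=
    (tdiv_le q hq hs hst).trans (ENNReal.div_le_div_right le_add_self _)
  calc (f t + t)/(t:ℝ≥0∞)^q = f t/(t:ℝ≥0∞)^q + (t:ℝ≥0∞)/(t:ℝ≥0∞)^q :=
        ENNReal.add_div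
    _ ≤ ((L₁*β⁻¹ : ℝ≥0) : ℝ≥0∞) * ((f s + s)/(s:ℝ≥0∞)^q) + (f s + s)/(s:ℝ≥0∞)^q :=
        add_le_add h1 h2
    _ = (L₁*β⁻¹+1 : ℝ≥0) * ((f s + s)/(s:ℝ≥0∞)^q) := by
        push_cast; rw [add_mul, one_mul]

lemma combineAB (q : ℝ) (hq : 1 ≤ q) (β L L₁ : ℝ≥0) (hβ0 : 0 < β) (hβ1 : β ≤ 1)
    (f : ℝ≥0 → ℝ≥0∞)
    (hinc : ∀ s t : ℝ≥0, 0 < s → s ≤ t → f s / (s:ℝ≥0∞) ≤ L * (f t / (t:ℝ≥0∞)))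
    (hdec : ∀ s t : ℝ≥0, 0 < s → s ≤ t →
      (f t + 1)/(t:ℝ≥0∞)^q ≤ L₁ * ((f s + 1)/(s:ℝ≥0∞)^q))
    (hA0 : f β ≤ 1) :
    ∀ s t : ℝ≥0, 0 < s → s ≤ t →
      (f t + t)/(t:ℝ≥0∞)^q ≤ ((L*β⁻¹+1)*(L₁*β⁻¹+1) : ℝ≥0) * ((f s + s)/(s:ℝ≥0∞)^q) := by
  intro s t hs hst
  have hC1 : (1:ℝ≥0) ≤ L*β⁻¹+1 := le_add_self
  have hC2 : (1:ℝ≥0) ≤ L₁*β⁻¹+1 := le_add_self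
  rcases le_total t β with h | h
  · calc (f t + t)/(t:ℝ≥0∞)^q
        ≤ (L*β⁻¹+1 : ℝ≥0) * ((f s + s)/(s:ℝ≥0∞)^q) := caseA q hq β L hβ0 f hinc hA0 s t hs hst h
      _ ≤ ((L*β⁻¹+1)*(L₁*β⁻¹+1) : ℝ≥0) * ((f s + s)/(s:ℝ≥0∞)^q) := by
          refine mul_le_mul_left ?_ _
          exact_mod_cast le_mul_of_one_le_right zero_le hC2
  rcases le_total β s with h' | h'
  · calc (f t + t)/(t:ℝ≥0∞)^q
        ≤ (L₁*β⁻¹+1 : ℝ≥0) * ((f s + s)/(s:ℝ≥0∞)^q) := caseB q hq β L₁ hβ0 hβ1 f hdec s t h' hst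
      _ ≤ ((L*β⁻¹+1)*(L₁*β⁻¹+1) : ℝ≥0) * ((f s + s)/(s:ℝ≥0∞)^q) := by
          refine mul_le_mul_left ?_ _
          exact_mod_cast le_mul_of_one_le_left zero_le hC1
  · calc (f t + t)/(t:ℝ≥0∞)^q
        ≤ (L₁*β⁻¹+1 : ℝ≥0) * ((f β + β)/(β:ℝ≥0∞)^q) := caseB q hq β L₁ hβ0 hβ1 f hdec β t le_rfl h
      _ ≤ (L₁*β⁻¹+1 : ℝ≥0) * ((L*β⁻¹+1 : ℝ≥0) * ((f s + s)/(s:ℝ≥0∞)^q)) :=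
          mul_le_mul_right (caseA q hq β L hβ0 f hinc hA0 s β hs h' le_rfl) _
      _ = ((L*β⁻¹+1)*(L₁*β⁻¹+1) : ℝ≥0) * ((f s + s)/(s:ℝ≥0∞)^q) := by
          rw [← mul_assoc, ← ENNReal.coe_mul, mul_comm (L₁*β⁻¹+1) (L*β⁻¹+1)]

/-- Let `Ω ⊂ ℝⁿ` be a bounded domain, `φ ∈ Φ_w(Ω)` and
`ψ(x,t) := φ(x,t) + t`. If `φ` satisfies `(aDec)_q^∞` and `(A0)`, then `ψ` satisfies
`(aDec)_q`, with constant depending only on `q` and the constants in `(aDec)_q^∞`,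
`(A0)` and the `(aInc)_1` property of `φ`. -/
theorem statement1 (q : ℝ) (β L L₁ : ℝ≥0) (hq : 1 ≤ q) (hβ0 : 0 < β) (hβ1 : β ≤ 1)
    (hL : 1 ≤ L) (hL₁ : 1 ≤ L₁) :
    ∃ C : ℝ≥0, 1 ≤ C ∧
      ∀ (n : ℕ) (Ω : Set (Fin n → ℝ)) (φ : (Fin n → ℝ) → ℝ≥0 → ℝ≥0∞),
        BoundedDomain Ω → IsWeakPhi Ω φ L → PhiADecInf Ω φ q L₁ → PhiA0 Ω φ β →
        PhiADec Ω (fun x t => φ x t + (t : ℝ≥0∞)) q C := by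
  refine ⟨(L*β⁻¹+1)*(L₁*β⁻¹+1), ?_, ?_⟩
  · have h1 : (1:ℝ≥0) ≤ L*β⁻¹+1 := le_add_self
    have h2 : (1:ℝ≥0) ≤ L₁*β⁻¹+1 := le_add_self
    simpa using mul_le_mul' h1 h2
  intro n Ω φ _hΩ hw hdecinf ha0
  filter_upwards [hdecinf, ha0] with x hdx hax hxΩ
  intro s t hs hst
  exact combineAB q hq β L L₁ hβ0 hβ1 (φ x)
    (fun s t hs hst => by simpa [ENNReal.rpow_one] using hw.2.2.1 x hxΩ s t hs hst)
    (hdx hxΩ) ((hax hxΩ).1) s t hs hst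
end
end

section
/- Let Ω ⊂ ℝⁿ be a bounded domain, let φ ∈ Φ_w(Ω) and define ψ(x,t) := φ(x,t) + t. If φ satisfies (A1), then ψ satisfies (A1), with constant depending only on the (A1) constant of φ and the (aInc)_1 constant of φ. -/
open MeasureTheory Set Filter ENNReal NNReal Metric

noncomputable section

/-! Since `ψ = φ + t` dominates both `φ` and `t`, `ψ⁻¹(x,τ) ≤ min (φ⁻¹(x,τ), τ)`. Conversely, if
`ψ(y,t) ≥ τ` then either `2t ≥ τ`, or `2φ(y,t) ≥ τ` and then `(aInc)_1` gives
`φ(y,2Lt) ≥ 2φ(y,t) ≥ τ`; hence `min (φ⁻¹(y,τ), τ) ≤ 2L ψ⁻¹(y,τ)`. Chaining these with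
`(A1)` for `φ` gives `(A1)` for `ψ` with constant `β / (2L)`. -/

section LeftInverse

variable {n : ℕ} {φ φ' : (Fin n → ℝ) → ℝ≥0 → ℝ≥0∞} {x : Fin n → ℝ} {τ : ℝ≥0∞}

lemma phiInv_le_of_le {t : ℝ≥0} (h : τ ≤ φ x t) : phiInv φ x τ ≤ t :=
  sInf_le ⟨t, h, rfl⟩

lemma le_phiInv {c : ℝ≥0∞} (h : ∀ t : ℝ≥0, τ ≤ φ x t → c ≤ t) : c ≤ phiInv φ x τ :=
  le_sInf <| by rintro _ ⟨t, ht, rfl⟩; exact h t ht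

lemma phiInv_le_phiInv (h : ∀ t, φ x t ≤ φ' x t) : phiInv φ' x τ ≤ phiInv φ x τ :=
  le_phiInv fun t ht => phiInv_le_of_le (ht.trans (h t))

lemma phiInv_add_coe_le_min (hτ : τ ≠ ⊤) :
    phiInv (fun x t => φ x t + (t : ℝ≥0∞)) x τ ≤ min (phiInv φ x τ) τ := by
  refine le_min (phiInv_le_phiInv fun t => le_self_add) ?_
  calc phiInv (fun x t => φ x t + (t : ℝ≥0∞)) x τ ≤ τ.toNNReal :=
        phiInv_le_of_le (by rw [coe_toNNReal hτ]; exact le_add_self)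
    _ = τ := coe_toNNReal hτ

end LeftInverse

section AlmostIncreasing

variable {n : ℕ} {Ω : Set (Fin n → ℝ)} {φ : (Fin n → ℝ) → ℝ≥0 → ℝ≥0∞} {L : ℝ≥0}
  {y : Fin n → ℝ}

lemma PhiAInc.mul_le {c t : ℝ≥0} (hφ : PhiAInc Ω φ 1 L) (hy : y ∈ Ω) (hc : 1 ≤ c)
    (ht : 0 < t) : c * φ y t ≤ L * φ y (c * t) := by
  have hinc := hφ y hy t (c * t) ht (le_mul_of_one_le_left t.2 hc)
  simp only [ENNReal.rpow_one] at hinc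
  have ht0 : (t : ℝ≥0∞) ≠ 0 := by exact_mod_cast ht.ne'
  have hct0 : ((c * t : ℝ≥0) : ℝ≥0∞) ≠ 0 := by
    exact_mod_cast (mul_pos (one_pos.trans_le hc) ht).ne'
  calc (c : ℝ≥0∞) * φ y t = (c * t : ℝ≥0) * (φ y t / t) := by
        rw [coe_mul, mul_assoc, ENNReal.mul_div_cancel ht0 coe_ne_top]
    _ ≤ (c * t : ℝ≥0) * (L * (φ y (c * t) / (c * t : ℝ≥0))) := by gcongr
    _ = L * φ y (c * t) := by
        rw [mul_left_comm, ENNReal.mul_div_cancel hct0 coe_ne_top]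

lemma PhiAInc.two_mul_le (hφ : PhiAInc Ω φ 1 L) (hy : y ∈ Ω) (hL : 1 ≤ L) {t : ℝ≥0}
    (ht : 0 < t) : 2 * φ y t ≤ φ y (2 * L * t) := by
  have hL0 : (L : ℝ≥0∞) ≠ 0 := by exact_mod_cast (one_pos.trans_le hL).ne'
  have h := hφ.mul_le hy (c := 2 * L) (one_le_two.trans (le_mul_of_one_le_right zero_le_two hL)) ht
  rw [coe_mul, mul_comm ((2 : ℝ≥0) : ℝ≥0∞), mul_assoc] at h
  exact (ENNReal.mul_le_mul_iff_right hL0 coe_ne_top).1 h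

lemma min_phiInv_le_of_le_add (hφ : PhiAInc Ω φ 1 L) (hzero : ∀ x ∈ Ω, φ x 0 = 0)
    (hy : y ∈ Ω) (hL : 1 ≤ L) {τ : ℝ≥0∞} {t : ℝ≥0} (ht : τ ≤ φ y t + t) :
    min (phiInv φ y τ) τ ≤ t * (2 * L : ℝ≥0) := by
  rcases le_or_gt (φ y t) t with hφt | hφt
  · calc min (phiInv φ y τ) τ ≤ τ := min_le_right _ _
      _ ≤ t + t := ht.trans (by gcongr)
      _ = t * 2 := by rw [mul_two]
      _ ≤ t * (2 * L : ℝ≥0) := by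
          gcongr; exact_mod_cast le_mul_of_one_le_right zero_le_two hL
  · have htpos : 0 < t := by
      by_contra! h
      rw [nonpos_iff_eq_zero.1 h, hzero y hy] at hφt
      exact absurd hφt (by simp)
    calc min (phiInv φ y τ) τ ≤ phiInv φ y τ := min_le_left _ _
      _ ≤ (2 * L * t : ℝ≥0) := phiInv_le_of_le <| calc
          τ ≤ φ y t + φ y t := ht.trans (by gcongr)
          _ = 2 * φ y t := (two_mul _).symm
          _ ≤ φ y (2 * L * t) := hφ.two_mul_le hy hL htpos
      _ = t * (2 * L : ℝ≥0) := by rw [mul_comm, coe_mul]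

lemma min_phiInv_div_le_phiInv_add (hφ : PhiAInc Ω φ 1 L) (hzero : ∀ x ∈ Ω, φ x 0 = 0)
    (hy : y ∈ Ω) (hL : 1 ≤ L) (τ : ℝ≥0∞) :
    min (phiInv φ y τ) τ / (2 * L : ℝ≥0) ≤ phiInv (fun x t => φ x t + (t : ℝ≥0∞)) y τ :=
  le_phiInv fun _ ht => ENNReal.div_le_of_le_mul (min_phiInv_le_of_le_add hφ hzero hy hL ht)

end AlmostIncreasing

lemma PhiA1.add_coe {n : ℕ} {Ω : Set (Fin n → ℝ)} {φ : (Fin n → ℝ) → ℝ≥0 → ℝ≥0∞}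
    {β L : ℝ≥0} (hA1 : PhiA1 Ω φ β) (hφ : PhiAInc Ω φ 1 L) (hzero : ∀ x ∈ Ω, φ x 0 = 0)
    (hβ : β ≤ 1) (hL : 1 ≤ L) :
    PhiA1 Ω (fun x t => φ x t + (t : ℝ≥0∞)) (β / (2 * L)) := by
  intro z ρ hρ
  filter_upwards [hA1 z ρ hρ] with x hx
  filter_upwards [hx] with y hxy hxB hyB τ hτ1 hτB
  have hτ : τ ≠ ⊤ := ne_top_of_le_ne_top
    (ENNReal.inv_ne_top.2 (measure_ball_pos _ _ hρ).ne') hτB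
  have h2L : (2 * L : ℝ≥0) ≠ 0 := (mul_pos two_pos (one_pos.trans_le hL)).ne'
  calc ((β / (2 * L) : ℝ≥0) : ℝ≥0∞) * phiInv (fun x t => φ x t + (t : ℝ≥0∞)) x τ
      ≤ β / (2 * L : ℝ≥0) * min (phiInv φ x τ) τ := by
        rw [coe_div h2L]; gcongr; exact phiInv_add_coe_le_min hτ
    _ = β * min (phiInv φ x τ) τ / (2 * L : ℝ≥0) := by
        rw [div_eq_mul_inv, div_eq_mul_inv, mul_right_comm]
    _ ≤ min (phiInv φ y τ) τ / (2 * L : ℝ≥0) := by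
        gcongr
        exact le_min ((mul_le_mul_right (min_le_left _ _) _).trans (hxy hxB hyB τ hτ1 hτB))
          (mul_le_of_le_one_of_le (by exact_mod_cast hβ) (min_le_right _ _))
    _ ≤ phiInv (fun x t => φ x t + (t : ℝ≥0∞)) y τ :=
        min_phiInv_div_le_phiInv_add hφ hzero hyB.2 hL τ

/-- Let `Ω ⊂ ℝⁿ` be a bounded domain, `φ ∈ Φ_w(Ω)` and
`ψ(x,t) := φ(x,t) + t`. If `φ` satisfies `(A1)`, then `ψ` satisfies `(A1)`, with
constant depending only on the `(A1)` constant of `φ` and the `(aInc)_1` constant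
of `φ`. -/
theorem statement2 (β L : ℝ≥0) (hβ0 : 0 < β) (hβ1 : β < 1) (hL : 1 ≤ L) :
    ∃ β' : ℝ≥0, 0 < β' ∧ β' < 1 ∧
      ∀ (n : ℕ) (Ω : Set (Fin n → ℝ)) (φ : (Fin n → ℝ) → ℝ≥0 → ℝ≥0∞),
        BoundedDomain Ω → IsWeakPhi Ω φ L → PhiA1 Ω φ β →
        PhiA1 Ω (fun x t => φ x t + (t : ℝ≥0∞)) β' := by
  have h2L : 1 ≤ 2 * L := one_le_two.trans (le_mul_of_one_le_right zero_le_two hL)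
  refine ⟨β / (2 * L), div_pos hβ0 (one_pos.trans_le h2L),
    (div_lt_one (one_pos.trans_le h2L)).2 (hβ1.trans_le h2L), ?_⟩
  rintro n Ω φ - ⟨hpre, -, hainc, -⟩ hA1
  exact hA1.add_coe hainc hpre.2.2.1 hβ1.le hL
end
end

section
/- Let Ω ⊂ ℝⁿ be a bounded domain, let φ ∈ Φ_w(Ω) with (aInc)_1 constant L ≥ 1, and define ψ(x,t) := φ(x,t) + t. Then there exists a constant C ≥ 1 depending only on L such that for every x ∈ Ω and every τ ≥ 0, C^{-1}·min{φ^{-1}(x,τ), τ} ≤ ψ^{-1}(x,τ) ≤ C·min{φ^{-1}(x,τ), τ}, where ψ^{-1} and φ^{-1} denote the left-inverses in the second variable. -/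
open MeasureTheory Set Filter ENNReal NNReal Metric

noncomputable section

/-- Let `Ω ⊂ ℝⁿ` be a bounded domain, `φ ∈ Φ_w(Ω)` with `(aInc)_1`
constant `L ≥ 1`, and `ψ(x,t) := φ(x,t) + t`. Then there is `C ≥ 1` depending only
on `L` such that for every `x ∈ Ω` and `τ ≥ 0`,
`C⁻¹ min{φ⁻¹(x,τ), τ} ≤ ψ⁻¹(x,τ) ≤ C min{φ⁻¹(x,τ), τ}`. -/
theorem statement4 (L : ℝ≥0) (hL : 1 ≤ L) :
    ∃ C : ℝ≥0, 1 ≤ C ∧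
      ∀ (n : ℕ) (Ω : Set (Fin n → ℝ)) (φ : (Fin n → ℝ) → ℝ≥0 → ℝ≥0∞),
        BoundedDomain Ω → IsWeakPhi Ω φ L →
        ∀ x ∈ Ω, ∀ τ : ℝ≥0,
          (C : ℝ≥0∞)⁻¹ * min (phiInv φ x τ) (τ : ℝ≥0∞) ≤
              phiInv (fun x t => φ x t + (t : ℝ≥0∞)) x τ ∧
          phiInv (fun x t => φ x t + (t : ℝ≥0∞)) x τ ≤
              (C : ℝ≥0∞) * min (phiInv φ x τ) (τ : ℝ≥0∞) := by

  refine ⟨2 * L, le_trans (by norm_num) (by exact_mod_cast mul_le_mul_right hL 2 : (2:ℝ≥0) * 1 ≤ 2 * L), ?_⟩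
  intro n Ω φ hΩ hφ x hx τ
  obtain ⟨⟨hmeas, hmono, h0, _, _⟩, _, haInc, _⟩ := hφ
  have hCne : ((2 * L : ℝ≥0) : ℝ≥0∞) ≠ 0 := by
    simp only [ne_eq, ENNReal.coe_eq_zero]
    positivity
  have hCnt : ((2 * L : ℝ≥0) : ℝ≥0∞) ≠ ⊤ := ENNReal.coe_ne_top
  constructor
  · -- lower bound
    rw [← ENNReal.div_eq_inv_mul]
    refine le_sInf ?_
    rintro b ⟨t, ht, rfl⟩
    rw [ENNReal.div_le_iff hCne hCnt]
    simp only [mem_setOf_eq] at ht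
    rcases eq_or_lt_of_le (zero_le : (0:ℝ≥0) ≤ t) with rfl | htpos
    · rw [h0 x hx, zero_add] at ht
      have : (τ : ℝ≥0∞) = 0 := le_antisymm (by exact_mod_cast ht) zero_le
      calc min (phiInv φ x τ) (τ : ℝ≥0∞) ≤ (τ : ℝ≥0∞) := min_le_right _ _
        _ ≤ _ := by rw [this]; exact zero_le
    · by_cases hcase : (τ : ℝ≥0) ≤ 2 * t
      · calc min (phiInv φ x τ) (τ : ℝ≥0∞) ≤ (τ : ℝ≥0∞) := min_le_right _ _
          _ ≤ ((2 * t : ℝ≥0) : ℝ≥0∞) := by exact_mod_cast hcase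
          _ ≤ (t : ℝ≥0∞) * ((2 * L : ℝ≥0) : ℝ≥0∞) := by
              push_cast
              calc (2:ℝ≥0∞) * t = t * 2 * 1 := by ring
                _ ≤ t * 2 * L := by gcongr; exact_mod_cast hL
                _ = t * (2 * L) := by ring
      · push_neg at hcase
        -- t < τ / 2, so τ' / 2 ≤ φ x t
        have htle : (t : ℝ≥0∞) ≤ (τ : ℝ≥0∞) / 2 := by
          rw [ENNReal.le_div_iff_mul_le (by norm_num) (by norm_num)]
          exact_mod_cast (mul_comm (2:ℝ≥0) t ▸ hcase.le)
        have hhalf : (τ : ℝ≥0∞) / 2 + (τ : ℝ≥0∞) / 2 = (τ : ℝ≥0∞) :=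
          ENNReal.add_halves _
        have hkey : (τ : ℝ≥0∞) / 2 ≤ φ x t := by
          have h1 : (τ : ℝ≥0∞) / 2 + (τ : ℝ≥0∞) / 2 ≤ φ x t + (τ : ℝ≥0∞) / 2 := by
            calc (τ : ℝ≥0∞) / 2 + (τ : ℝ≥0∞) / 2 = (τ : ℝ≥0∞) := hhalf
              _ ≤ φ x t + (t : ℝ≥0∞) := ht
              _ ≤ φ x t + (τ : ℝ≥0∞) / 2 := add_le_add_right htle _
          have hfin : (τ : ℝ≥0∞) / 2 ≠ ⊤ := by
            exact (ENNReal.div_lt_top ENNReal.coe_ne_top (by norm_num)).ne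
          exact (ENNReal.add_le_add_iff_right hfin).mp h1
        -- use aInc to get τ ≤ φ x (2 L t)
        have h2L : (1 : ℝ≥0) ≤ 2 * L :=
          le_trans hL (le_mul_of_one_le_left zero_le one_le_two)
        have hLt : t ≤ 2 * L * t := le_mul_of_one_le_left (zero_le : (0:ℝ≥0) ≤ t) h2L
        have hainc := haInc x hx t (2 * L * t) htpos hLt
        simp only [ENNReal.rpow_one] at hainc
        have htne : (t : ℝ≥0∞) ≠ 0 := by exact_mod_cast htpos.ne'
        have hune : ((2 * L * t : ℝ≥0) : ℝ≥0∞) ≠ 0 := by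
          simp only [ne_eq, ENNReal.coe_eq_zero]
          positivity
        have hunt : ((2 * L * t : ℝ≥0) : ℝ≥0∞) ≠ ⊤ := ENNReal.coe_ne_top
        have hLne : (L : ℝ≥0∞) ≠ 0 := by exact_mod_cast (lt_of_lt_of_le one_pos hL).ne'
        have hLnt : (L : ℝ≥0∞) ≠ ⊤ := ENNReal.coe_ne_top
        have hchain : (τ : ℝ≥0∞) ≤ φ x (2 * L * t) := by
          have e1 : φ x t = φ x t / (t : ℝ≥0∞) * t := (ENNReal.div_mul_cancel htne ENNReal.coe_ne_top).symm
          have e2 : φ x (2 * L * t) = φ x (2 * L * t) / ((2 * L * t : ℝ≥0) : ℝ≥0∞) * ((2 * L * t : ℝ≥0) : ℝ≥0∞) :=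
            (ENNReal.div_mul_cancel hune hunt).symm
          calc (τ : ℝ≥0∞) = 2 * ((τ : ℝ≥0∞) / 2) := by
                rw [two_mul, hhalf]
            _ ≤ 2 * φ x t := by exact mul_le_mul_right hkey 2
            _ = 2 * (φ x t / (t : ℝ≥0∞) * t) := by rw [← e1]
            _ ≤ 2 * ((L : ℝ≥0∞) * (φ x (2 * L * t) / ((2 * L * t : ℝ≥0) : ℝ≥0∞)) * t) :=
                mul_le_mul_right (mul_le_mul_left hainc _) 2
            _ = φ x (2 * L * t) / ((2 * L * t : ℝ≥0) : ℝ≥0∞) * ((2 * L * t : ℝ≥0) : ℝ≥0∞) := by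
                push_cast
                ring
            _ = φ x (2 * L * t) := e2.symm
        have : phiInv φ x τ ≤ ((2 * L * t : ℝ≥0) : ℝ≥0∞) :=
          sInf_le ⟨2 * L * t, hchain, rfl⟩
        calc min (phiInv φ x τ) (τ : ℝ≥0∞) ≤ phiInv φ x τ := min_le_left _ _
          _ ≤ ((2 * L * t : ℝ≥0) : ℝ≥0∞) := this
          _ = (t : ℝ≥0∞) * ((2 * L : ℝ≥0) : ℝ≥0∞) := by push_cast; ring
  · -- upper bound
    have h1 : phiInv (fun x t => φ x t + (t : ℝ≥0∞)) x τ ≤ phiInv φ x τ := by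
      refine sInf_le_sInf (image_mono ?_)
      intro t ht
      simp only [mem_setOf_eq] at ht ⊢
      exact le_trans ht le_self_add
    have h2 : phiInv (fun x t => φ x t + (t : ℝ≥0∞)) x τ ≤ (τ : ℝ≥0∞) :=
      sInf_le ⟨τ, show (τ : ℝ≥0∞) ≤ φ x τ + (τ : ℝ≥0∞) from le_add_self, rfl⟩
    calc phiInv (fun x t => φ x t + (t : ℝ≥0∞)) x τ ≤ min (phiInv φ x τ) (τ : ℝ≥0∞) :=
          le_min h1 h2
      _ ≤ ((2 * L : ℝ≥0) : ℝ≥0∞) * min (phiInv φ x τ) (τ : ℝ≥0∞) := by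
          refine le_mul_of_one_le_left zero_le ?_
          exact_mod_cast le_trans (by norm_num) (mul_le_mul_right hL 2 : (2:ℝ≥0) * 1 ≤ 2 * L)
end
end

section
/- Let φ : [0,∞) → [0,∞] be a Φ-prefunction (independent of x) satisfying (aInc)_p for some p ≥ 1 and (aDec)_q for some q < ∞, with constant L ≥ 1. Then there exists a constant c > 0 depending only on p, q and L such that for every measurable set D ⊂ ℝⁿ with 0 < |D| < ∞ and every measurable function f on D, φ^{-1}(⨍_D φ(|f|) dx) ≤ c·(⨍_D |f|^q dx)^{1/q}, where φ^{-1}(τ) := inf{t ≥ 0 : φ(t) ≥ τ} is the left-inverse and ⨍_D denotes the integral average over D. -/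
open MeasureTheory Set Filter ENNReal NNReal

noncomputable section

/-- `φ : [0,∞) → [0,∞]` is a Φ-prefunction (independent of the space variable). -/
def PhiPrefun0 (φ : ℝ≥0 → ℝ≥0∞) : Prop :=
  Monotone φ ∧ φ 0 = 0 ∧
  Tendsto φ (nhdsWithin 0 (Ioi 0)) (nhds 0) ∧ Tendsto φ atTop (nhds ⊤)

/-- `(aInc)_p` with constant `L`: `t ↦ φ(t)/t^p` is `L`-almost increasing on `(0,∞)`. -/
def AInc0 (φ : ℝ≥0 → ℝ≥0∞) (p : ℝ) (L : ℝ≥0) : Prop :=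
  ∀ s t : ℝ≥0, 0 < s → s ≤ t →
    φ s / (s : ℝ≥0∞) ^ p ≤ L * (φ t / (t : ℝ≥0∞) ^ p)

/-- `(aDec)_q` with constant `L`: `t ↦ φ(t)/t^q` is `L`-almost decreasing on `(0,∞)`. -/
def ADec0 (φ : ℝ≥0 → ℝ≥0∞) (q : ℝ) (L : ℝ≥0) : Prop :=
  ∀ s t : ℝ≥0, 0 < s → s ≤ t →
    φ t / (t : ℝ≥0∞) ^ q ≤ L * (φ s / (s : ℝ≥0∞) ^ q)

/-- The left-inverse `φ⁻¹(τ) = inf {t ≥ 0 : φ(t) ≥ τ}`. -/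
def phiInv0 (φ : ℝ≥0 → ℝ≥0∞) (τ : ℝ≥0∞) : ℝ≥0∞ :=
  sInf ((fun t : ℝ≥0 => (t : ℝ≥0∞)) '' {t : ℝ≥0 | τ ≤ φ t})

/-- Let `φ` be a Φ-prefunction satisfying `(aInc)_p` for some
`p ≥ 1` and `(aDec)_q` for some `q < ∞`, with constant `L ≥ 1`. Then there is
`c > 0` depending only on `p`, `q` and `L` such that for every measurable `D ⊂ ℝⁿ`
with `0 < |D| < ∞` and every measurable `f` on `D`,
`φ⁻¹(⨍_D φ(|f|)) ≤ c (⨍_D |f|^q)^{1/q}`. -/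
theorem statement6 (p q : ℝ) (L : ℝ≥0) (hp : 1 ≤ p) (hq : 1 ≤ q) (hL : 1 ≤ L) :
    ∃ c : ℝ≥0, 0 < c ∧
      ∀ (φ : ℝ≥0 → ℝ≥0∞), PhiPrefun0 φ → AInc0 φ p L → ADec0 φ q L →
        ∀ (n : ℕ) (D : Set (Fin n → ℝ)) (f : (Fin n → ℝ) → ℝ),
          MeasurableSet D → 0 < volume D → volume D < ⊤ →
          AEMeasurable f (volume.restrict D) →
          phiInv0 φ ((∫⁻ x in D, φ ‖f x‖₊ ∂volume) / volume D) ≤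
            (c : ℝ≥0∞) * ((∫⁻ x in D, (‖f x‖₊ : ℝ≥0∞) ^ q ∂volume) / volume D) ^ (1 / q) := by
  have hp0 : p ≠ 0 := by positivity
  have hq0 : q ≠ 0 := by positivity
  have hL0 : (L : ℝ≥0∞) ≠ 0 := by exact_mod_cast (one_pos.trans_le hL).ne'
  set c : ℝ≥0 := (2 * L ^ 2) ^ p⁻¹ with hc_def
  have hc1 : 1 ≤ c := by
    apply NNReal.one_le_rpow _ (by positivity)
    calc (1 : ℝ≥0) ≤ 2 * 1 := by norm_num
    _ ≤ 2 * L ^ 2 := by gcongr; exact one_le_pow₀ hL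
  have hc0 : c ≠ 0 := (one_pos.trans_le hc1).ne'
  have hcp : ((c : ℝ≥0∞)) ^ p = 2 * (L : ℝ≥0∞) ^ 2 := by
    rw [← ENNReal.coe_rpow_of_ne_zero hc0, hc_def, NNReal.rpow_inv_rpow hp0]
    push_cast
    ring
  refine ⟨c, one_pos.trans_le hc1, ?_⟩
  intro φ hφ hInc hDec n D f hD hD0 hDtop hf
  obtain ⟨hmono, hzero, -, -⟩ := hφ
  have hD0' : volume D ≠ 0 := hD0.ne'
  have hDtop' : volume D ≠ ⊤ := hDtop.ne
  set I := ∫⁻ x in D, (‖f x‖₊ : ℝ≥0∞) ^ q ∂volume with hI_def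
  set A := (∫⁻ x in D, φ ‖f x‖₊ ∂volume) / volume D with hA_def
  have hfq : AEMeasurable (fun x => (‖f x‖₊ : ℝ≥0∞) ^ q) (volume.restrict D) := by
    exact hf.nnnorm.coe_nnreal_ennreal.pow_const q
  -- Case I = 0
  rcases eq_or_ne I 0 with hI0 | hI0
  · have hf0 : ∀ᵐ x ∂(volume.restrict D), (‖f x‖₊ : ℝ≥0∞) ^ q = 0 :=
      (lintegral_eq_zero_iff' hfq).mp hI0
    have hA0 : A = 0 := by
      have : (∫⁻ x in D, φ ‖f x‖₊ ∂volume) = 0 := by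
        rw [← lintegral_zero (μ := volume.restrict D)]
        apply lintegral_congr_ae
        filter_upwards [hf0] with x hx
        have : ‖f x‖₊ = 0 := by
          have := (ENNReal.rpow_eq_zero_iff.mp hx)
          rcases this with ⟨h1, -⟩ | ⟨h1, -⟩
          · exact_mod_cast h1
          · exact absurd h1 coe_ne_top
        rw [this, hzero]
      rw [hA_def, this, ENNReal.zero_div]
    have : phiInv0 φ A ≤ 0 := by
      have : (0 : ℝ≥0∞) ∈ (fun t : ℝ≥0 => (t : ℝ≥0∞)) '' {t : ℝ≥0 | A ≤ φ t} :=
        ⟨0, by simp [hA0], by simp⟩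
      simpa [phiInv0] using sInf_le this
    exact this.trans zero_le
  -- Case I = ⊤
  rcases eq_or_ne I ⊤ with hItop | hItop
  · have : (I / volume D) ^ (1 / q) = ⊤ := by
      rw [hItop, ENNReal.top_div_of_ne_top hDtop', ENNReal.top_rpow_of_pos (by positivity)]
    rw [this, ENNReal.mul_top (by exact_mod_cast hc0)]
    exact le_top
  -- Main case : 0 < I < ⊤
  set B : ℝ≥0∞ := (I / volume D) ^ (1 / q) with hB_def
  have hBq : B ^ q = I / volume D := by
    rw [hB_def, one_div, ENNReal.rpow_inv_rpow hq0]
  have hB0 : B ≠ 0 := by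
    simp only [hB_def, ne_eq, ENNReal.rpow_eq_zero_iff, not_or]
    constructor
    · rintro ⟨h1, -⟩
      exact hI0 (by simpa [ENNReal.div_eq_zero_iff, hDtop'] using h1)
    · rintro ⟨-, h2⟩
      have : (0:ℝ) < 1/q := by positivity
      linarith
  have hBtop : B ≠ ⊤ := by
    rw [hB_def]
    apply ENNReal.rpow_ne_top_of_nonneg (by positivity)
    simp [ENNReal.div_eq_top, hItop, hD0']
  set b : ℝ≥0 := B.toNNReal with hb_def
  have hbB : (b : ℝ≥0∞) = B := coe_toNNReal hBtop
  have hb0 : 0 < b := by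
    rw [pos_iff_ne_zero]
    intro h
    apply hB0
    rw [← hbB, h, ENNReal.coe_zero]
  have hbq_ne0 : ((b : ℝ≥0∞)) ^ q ≠ 0 := by
    simp [ENNReal.rpow_eq_zero_iff, hb0.ne', coe_ne_top]
  have hbq_netop : ((b : ℝ≥0∞)) ^ q ≠ ⊤ := by
    apply ENNReal.rpow_ne_top_of_nonneg (by positivity) coe_ne_top
  -- key integral bound: A ≤ 2 L φ b
  have hA2L : A ≤ 2 * (L : ℝ≥0∞) * φ b := by
    rcases eq_or_ne (φ b) ⊤ with hfb | hfb
    · rw [hfb, ENNReal.mul_top (mul_ne_zero (by norm_num) hL0)]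
      exact le_top
    -- pointwise bound
    have hpt : ∀ x, φ ‖f x‖₊ ≤
        (L : ℝ≥0∞) * φ b + ((L : ℝ≥0∞) * φ b / (b : ℝ≥0∞) ^ q) * (‖f x‖₊ : ℝ≥0∞) ^ q := by
      intro x
      rcases le_or_gt ‖f x‖₊ b with h | h
      · calc φ ‖f x‖₊ ≤ φ b := hmono h
        _ ≤ (L : ℝ≥0∞) * φ b := le_mul_of_one_le_left zero_le (by exact_mod_cast hL)
        _ ≤ _ := le_self_add
      · have hdec := hDec b ‖f x‖₊ hb0 h.le
        have ht_ne0 : ((‖f x‖₊ : ℝ≥0∞)) ^ q ≠ 0 := by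
          simp [ENNReal.rpow_eq_zero_iff, (hb0.trans h).ne', coe_ne_top]
        have ht_netop : ((‖f x‖₊ : ℝ≥0∞)) ^ q ≠ ⊤ :=
          ENNReal.rpow_ne_top_of_nonneg (by positivity) coe_ne_top
        have : φ ‖f x‖₊ ≤ (L : ℝ≥0∞) * (φ b / (b : ℝ≥0∞) ^ q) * (‖f x‖₊ : ℝ≥0∞) ^ q := by
          rw [← ENNReal.div_le_iff ht_ne0 ht_netop]
          exact hdec
        refine le_add_left (this.trans (le_of_eq ?_))
        rw [mul_div_assoc]
      -- done pointwise
    have hint : (∫⁻ x in D, φ ‖f x‖₊ ∂volume) ≤ 2 * (L : ℝ≥0∞) * φ b * volume D := by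
      calc (∫⁻ x in D, φ ‖f x‖₊ ∂volume)
          ≤ ∫⁻ x in D, ((L : ℝ≥0∞) * φ b +
              ((L : ℝ≥0∞) * φ b / (b : ℝ≥0∞) ^ q) * (‖f x‖₊ : ℝ≥0∞) ^ q) ∂volume :=
            lintegral_mono hpt
        _ = (L : ℝ≥0∞) * φ b * volume D +
              ((L : ℝ≥0∞) * φ b / (b : ℝ≥0∞) ^ q) * I := by
            rw [lintegral_add_left measurable_const, lintegral_const,
              Measure.restrict_apply_univ, lintegral_const_mul' _ _
                (ENNReal.div_lt_top (ENNReal.mul_ne_top coe_ne_top hfb) hbq_ne0).ne]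
        _ = (L : ℝ≥0∞) * φ b * volume D + (L : ℝ≥0∞) * φ b * volume D := by
            congr 1
            have hIeq : I = (b : ℝ≥0∞) ^ q * volume D := by
              rw [hbB, hBq, ENNReal.div_mul_cancel hD0' hDtop']
            rw [hIeq, ← mul_assoc, ENNReal.div_mul_cancel hbq_ne0 hbq_netop]
        _ = 2 * (L : ℝ≥0∞) * φ b * volume D := by ring
    rw [hA_def, ENNReal.div_le_iff hD0' hDtop']
    exact hint
  -- key growth bound: 2 L φ b ≤ φ (c * b)
  have hgrow : 2 * (L : ℝ≥0∞) * φ b ≤ φ (c * b) := by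
    have hb_le : b ≤ c * b := le_mul_of_one_le_left zero_le hc1
    have hinc := hInc b (c * b) hb0 hb_le
    have hbp_ne0 : ((b : ℝ≥0∞)) ^ p ≠ 0 := by
      simp [ENNReal.rpow_eq_zero_iff, hb0.ne', coe_ne_top]
    have hbp_netop : ((b : ℝ≥0∞)) ^ p ≠ ⊤ :=
      ENNReal.rpow_ne_top_of_nonneg (by positivity) coe_ne_top
    have hcb_pow : ((↑(c * b) : ℝ≥0∞)) ^ p = 2 * (L : ℝ≥0∞) ^ 2 * (b : ℝ≥0∞) ^ p := by
      rw [ENNReal.coe_mul, ENNReal.mul_rpow_of_nonneg _ _ (by positivity), hcp]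
    set Y : ℝ≥0∞ := 2 * (L : ℝ≥0∞) ^ 2 * (b : ℝ≥0∞) ^ p with hY_def
    have hY0 : Y ≠ 0 :=
      mul_ne_zero (mul_ne_zero (by norm_num) (pow_ne_zero 2 hL0)) hbp_ne0
    have hYtop : Y ≠ ⊤ :=
      ENNReal.mul_ne_top (ENNReal.mul_ne_top (by norm_num) (ENNReal.pow_ne_top coe_ne_top))
        hbp_netop
    calc 2 * (L : ℝ≥0∞) * φ b
        = 2 * (L : ℝ≥0∞) * (φ b / (b : ℝ≥0∞) ^ p * (b : ℝ≥0∞) ^ p) := by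
          rw [ENNReal.div_mul_cancel hbp_ne0 hbp_netop]
      _ ≤ 2 * (L : ℝ≥0∞) * ((L : ℝ≥0∞) * (φ (c * b) / ((↑(c * b) : ℝ≥0∞)) ^ p)
            * (b : ℝ≥0∞) ^ p) := by gcongr
      _ = φ (c * b) / Y * Y := by
          rw [hcb_pow]
          simp only [div_eq_mul_inv, hY_def]
          ring
      _ = φ (c * b) := ENNReal.div_mul_cancel hY0 hYtop
  -- conclude
  have hmem : ((↑(c * b) : ℝ≥0∞)) ∈ (fun t : ℝ≥0 => (t : ℝ≥0∞)) '' {t : ℝ≥0 | A ≤ φ t} :=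
    ⟨c * b, hA2L.trans hgrow, rfl⟩
  calc phiInv0 φ A ≤ (↑(c * b) : ℝ≥0∞) := sInf_le hmem
    _ = (c : ℝ≥0∞) * B := by rw [ENNReal.coe_mul, hbB]
    _ = (c : ℝ≥0∞) * (I / volume D) ^ (1 / q) := by rw [hB_def]
end
end

section
/- Let 0 < r < R < ∞, let Z be a bounded non-negative function on the interval [r,R], and let X : (0,∞) → [0,∞) satisfy (aDec)_q for some q < ∞ with constant L ≥ 1. Assume there exists θ ∈ [0,1) such that Z(τ) ≤ X(1/(σ−τ)) + θ·Z(σ) for all r ≤ τ < σ ≤ R. Then Z(r) ≤ C·X(1/(R−r)), where the constant C depends only on q, L and θ (and not on the supremum of Z). -/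
open Set

private lemma geom_sum_bound (μ : ℝ) (h0 : 0 ≤ μ) (h1 : μ < 1) (n : ℕ) :
    ∑ i ∈ Finset.range n, μ ^ i ≤ 1 / (1 - μ) := by
  rw [geom_sum_eq h1.ne n]
  have h2 : 0 < 1 - μ := by linarith
  have h3 : (μ ^ n - 1) / (μ - 1) = (1 - μ ^ n) / (1 - μ) := by
    rw [← neg_div_neg_eq]; ring_nf
  rw [h3]
  have hμn : 0 ≤ μ ^ n := pow_nonneg h0 n
  exact div_le_div₀ zero_le_one (by linarith) h2 le_rfl

/-- (Iteration lemma.) Let `0 < r < R < ∞`, `Z` bounded and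
non-negative on `[r,R]`, and `X : (0,∞) → [0,∞)` satisfy `(aDec)_q` with constant
`L ≥ 1`. If there is `θ ∈ [0,1)` with `Z(τ) ≤ X(1/(σ−τ)) + θ Z(σ)` for all
`r ≤ τ < σ ≤ R`, then `Z(r) ≤ C X(1/(R−r))` with `C = C(q, L, θ)` independent of
the supremum of `Z`. -/
theorem statement7 (q L θ : ℝ) (hL : 1 ≤ L) (hθ0 : 0 ≤ θ) (hθ1 : θ < 1) :
    ∃ C : ℝ, 0 < C ∧
      ∀ (r R : ℝ) (Z X : ℝ → ℝ), 0 < r → r < R →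
        (∀ t ∈ Icc r R, 0 ≤ Z t) →
        (∃ M : ℝ, ∀ t ∈ Icc r R, Z t ≤ M) →
        (∀ t : ℝ, 0 < t → 0 ≤ X t) →
        (∀ s t : ℝ, 0 < s → s ≤ t → X t / t ^ q ≤ L * (X s / s ^ q)) →
        (∀ τ σ : ℝ, r ≤ τ → τ < σ → σ ≤ R → Z τ ≤ X (1 / (σ - τ)) + θ * Z σ) →
        Z r ≤ C * X (1 / (R - r)) := by
  -- setup of constants
  set q1 : ℝ := max q 1 with hq1def
  have hq1 : 1 ≤ q1 := le_max_right _ _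
  have hq1pos : 0 < q1 := lt_of_lt_of_le one_pos hq1
  have hqq1 : q ≤ q1 := le_max_left _ _
  set a : ℝ := (θ + 1) / 2 with hadef
  have ha0 : 0 < a := by positivity
  have ha1 : a < 1 := by rw [hadef]; linarith
  have hθa : θ < a := by rw [hadef]; linarith
  set μ : ℝ := θ / a with hμdef
  have hμ0 : 0 ≤ μ := div_nonneg hθ0 ha0.le
  have hμ1 : μ < 1 := (div_lt_one ha0).mpr hθa
  set lam : ℝ := a ^ (1 / q1) with hlamdef
  have hlam0 : 0 < lam := Real.rpow_pos_of_pos ha0 _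
  have hlam1 : lam < 1 := Real.rpow_lt_one ha0.le ha1 (by positivity)
  have hlamq : lam ^ q1 = a := by
    rw [hlamdef, ← Real.rpow_mul ha0.le, one_div_mul_cancel hq1pos.ne', Real.rpow_one]
  set K : ℝ := L * (1 - lam)⁻¹ ^ q1 with hKdef
  have hK0 : 0 < K := by
    have h1 : (0:ℝ) < (1 - lam)⁻¹ ^ q1 :=
      Real.rpow_pos_of_pos (inv_pos.mpr (by linarith)) _
    exact mul_pos (by linarith) h1
  refine ⟨K / (1 - μ), div_pos hK0 (by linarith), ?_⟩
  intro r R Z X hr hrR hZ0 hZM hX0 hXdec hiter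
  obtain ⟨M, hM⟩ := hZM
  set M' : ℝ := max M 0 with hM'def
  have hM'0 : 0 ≤ M' := le_max_right _ _
  have hRr : 0 < R - r := by linarith
  set X0 : ℝ := X (1 / (R - r)) with hX0def
  have hX0nn : 0 ≤ X0 := hX0 _ (by positivity)
  -- upgraded almost-decreasing property with exponent q1
  have hXdec' : ∀ s t : ℝ, 0 < s → s ≤ t → X t ≤ L * X s * (t / s) ^ q1 := by
    intro s t hs hst
    have ht : 0 < t := lt_of_lt_of_le hs hst
    have h1 := hXdec s t hs hst
    have hts1 : 1 ≤ t / s := (one_le_div hs).mpr hst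
    have h2 : (t / s) ^ q ≤ (t / s) ^ q1 := Real.rpow_le_rpow_of_exponent_le hts1 hqq1
    have hdiv : (t / s) ^ q = t ^ q / s ^ q := Real.div_rpow ht.le hs.le q
    have htq : 0 < t ^ q := Real.rpow_pos_of_pos ht q
    have hsq : 0 < s ^ q := Real.rpow_pos_of_pos hs q
    have hXs : 0 ≤ X s := hX0 s hs
    calc X t = X t / t ^ q * t ^ q := by field_simp
      _ ≤ L * (X s / s ^ q) * t ^ q := by
          exact mul_le_mul_of_nonneg_right h1 htq.le
      _ = L * X s * ((t / s) ^ q) := by rw [hdiv]; ring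
      _ ≤ L * X s * (t / s) ^ q1 := by
          apply mul_le_mul_of_nonneg_left h2
          positivity
  -- the interpolation points
  set t : ℕ → ℝ := fun n => R - lam ^ n * (R - r) with htdef
  have ht0 : t 0 = r := by simp [htdef]
  have hlampow : ∀ n : ℕ, 0 < lam ^ n := fun n => pow_pos hlam0 n
  have hlampow1 : ∀ n : ℕ, lam ^ n ≤ 1 := fun n => pow_le_one₀ hlam0.le hlam1.le
  have htr : ∀ n, r ≤ t n := by
    intro n
    have := mul_le_of_le_one_left hRr.le (hlampow1 n)
    simp only [htdef]; linarith
  have htR : ∀ n, t n ≤ R := by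
    intro n
    have : 0 ≤ lam ^ n * (R - r) := by positivity
    simp only [htdef]; linarith
  have htmem : ∀ n, t n ∈ Icc r R := fun n => ⟨htr n, htR n⟩
  have hd : ∀ n : ℕ, t (n + 1) - t n = lam ^ n * (1 - lam) * (R - r) := by
    intro n; simp only [htdef]; ring
  have hdpos : ∀ n : ℕ, 0 < t (n + 1) - t n := by
    intro n; rw [hd n]
    have h1 : (0:ℝ) < 1 - lam := by linarith
    positivity
  -- bound on each X term
  have hterm : ∀ i : ℕ, θ ^ i * X (1 / (t (i + 1) - t i)) ≤ K * μ ^ i * X0 := by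
    intro i
    have hdle : t (i + 1) - t i ≤ R - r := by
      rw [hd i]
      have h1 : lam ^ i * (1 - lam) ≤ 1 := by nlinarith [hlampow1 i, hlampow i]
      nlinarith
    have hs : (0:ℝ) < 1 / (R - r) := by positivity
    have hst : 1 / (R - r) ≤ 1 / (t (i + 1) - t i) :=
      one_div_le_one_div_of_le (hdpos i) hdle
    have h1 := hXdec' _ _ hs hst
    have hratio : 1 / (t (i + 1) - t i) / (1 / (R - r)) = (lam ^ i * (1 - lam))⁻¹ := by
      rw [hd i]
      have h2 : (0:ℝ) < 1 - lam := by linarith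
      field_simp
    rw [hratio] at h1
    have hlam1' : (0:ℝ) < 1 - lam := by linarith
    have hpow : (lam ^ i : ℝ) ^ q1 = a ^ i := by
      rw [← Real.rpow_natCast lam i, ← Real.rpow_mul hlam0.le, mul_comm (i:ℝ) q1,
        Real.rpow_mul hlam0.le, hlamq, Real.rpow_natCast]
    have hinv : ((lam ^ i * (1 - lam))⁻¹ : ℝ) ^ q1 = (a ^ i)⁻¹ * (1 - lam)⁻¹ ^ q1 := by
      rw [mul_inv,
        Real.mul_rpow (inv_nonneg.mpr (hlampow i).le) (inv_nonneg.mpr hlam1'.le),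
        Real.inv_rpow (hlampow i).le, hpow]
    rw [hinv] at h1
    have hθi : (0:ℝ) ≤ θ ^ i := pow_nonneg hθ0 i
    calc θ ^ i * X (1 / (t (i + 1) - t i))
        ≤ θ ^ i * (L * X0 * ((a ^ i)⁻¹ * (1 - lam)⁻¹ ^ q1)) :=
          mul_le_mul_of_nonneg_left h1 hθi
      _ = K * (θ ^ i * (a ^ i)⁻¹) * X0 := by rw [hKdef]; ring
      _ = K * μ ^ i * X0 := by
          have hμi : μ ^ i = θ ^ i * (a ^ i)⁻¹ := by
            rw [hμdef, div_pow, div_eq_mul_inv]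
          rw [hμi]
  -- main induction
  have key : ∀ n : ℕ,
      Z r ≤ (∑ i ∈ Finset.range n, θ ^ i * X (1 / (t (i + 1) - t i))) + θ ^ n * Z (t n) := by
    intro n
    induction n with
    | zero => simp [ht0]
    | succ n ih =>
      have hstep := hiter (t n) (t (n + 1)) (htr n) (by linarith [hdpos n]) (htR (n + 1))
      have hθn : (0:ℝ) ≤ θ ^ n := pow_nonneg hθ0 n
      calc Z r ≤ (∑ i ∈ Finset.range n, θ ^ i * X (1 / (t (i + 1) - t i))) + θ ^ n * Z (t n) := ih
        _ ≤ (∑ i ∈ Finset.range n, θ ^ i * X (1 / (t (i + 1) - t i)))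
              + θ ^ n * (X (1 / (t (n + 1) - t n)) + θ * Z (t (n + 1))) := by
            have := mul_le_mul_of_nonneg_left hstep hθn
            linarith
        _ = (∑ i ∈ Finset.range (n + 1), θ ^ i * X (1 / (t (i + 1) - t i)))
              + θ ^ (n + 1) * Z (t (n + 1)) := by
            rw [Finset.sum_range_succ]; ring
  -- combine bounds
  have key2 : ∀ n : ℕ, Z r ≤ K * X0 * (1 / (1 - μ)) + θ ^ n * M' := by
    intro n
    have hsum : (∑ i ∈ Finset.range n, θ ^ i * X (1 / (t (i + 1) - t i)))
        ≤ K * X0 * (1 / (1 - μ)) := by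
      calc (∑ i ∈ Finset.range n, θ ^ i * X (1 / (t (i + 1) - t i)))
          ≤ ∑ i ∈ Finset.range n, K * μ ^ i * X0 :=
            Finset.sum_le_sum fun i _ => hterm i
        _ = K * X0 * ∑ i ∈ Finset.range n, μ ^ i := by
            rw [Finset.mul_sum]; congr 1; ext i; ring
        _ ≤ K * X0 * (1 / (1 - μ)) := by
            apply mul_le_mul_of_nonneg_left (geom_sum_bound μ hμ0 hμ1 n)
            positivity
    have hZn : θ ^ n * Z (t n) ≤ θ ^ n * M' := by
      apply mul_le_mul_of_nonneg_left _ (pow_nonneg hθ0 n)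
      exact le_trans (hM _ (htmem n)) (le_max_left _ _)
    linarith [key n]
  -- pass to the limit
  have hlim : Filter.Tendsto (fun n : ℕ => K * X0 * (1 / (1 - μ)) + θ ^ n * M')
      Filter.atTop (nhds (K * X0 * (1 / (1 - μ)) + 0)) := by
    apply Filter.Tendsto.add tendsto_const_nhds
    simpa using (tendsto_pow_atTop_nhds_zero_of_lt_one hθ0 hθ1).mul_const M'
  have := ge_of_tendsto' hlim key2
  calc Z r ≤ K * X0 * (1 / (1 - μ)) + 0 := this
    _ = K / (1 - μ) * X (1 / (R - r)) := by rw [hX0def]; ring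
end

section
/- Let Ω ⊂ ℝⁿ be a bounded domain and let φ ∈ Φ_w(Ω) satisfy (A0), (A1-n) and (aDec)_q for some q < ∞. Then there exists a constant C ≥ 1, depending only on n and the constants in (A0), (A1-n), (aDec)_q and (aInc)_1, such that for every ball B ⊂ ℝⁿ with |B| ≤ 1 and |B ∩ Ω| > 0 and every t ∈ [0, |B|^{-1/n}], one has φ_B^+(t) ≤ C·(φ_B^-(t) + 1), where φ_B^+(t) := ess sup_{x ∈ B∩Ω} φ(x,t) and φ_B^-(t) := ess inf_{x ∈ B∩Ω} φ(x,t). -/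
open MeasureTheory Set Filter ENNReal NNReal Metric

noncomputable section

/-! For `t ≤ 1` the bound is an absolute constant: below `β₀` by `(aInc)_1` and above it by
`(aDec)_q`, both anchored at `φ(x,β₀) ≤ 1` from `(A0)`. For `1 ≤ t ≤ |B|^{-1/n}`, `(aDec)_q`
gives `φ(x,t) ≲ β₁^{-q} φ(x,β₁t)`, and `(A1-n)` bounds `φ(x,β₁t)` by `φ(y,t)`. So
`φ(x,t) ≤ C (φ(y,t) + 1)` for a.e. `x, y ∈ B ∩ Ω`; take the essential supremum in `x` and the
essential infimum in `y`. -/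

def IsAInc (f : ℝ≥0 → ℝ≥0∞) (p : ℝ) (L : ℝ≥0) : Prop :=
  ∀ s t : ℝ≥0, 0 < s → s ≤ t → f s / (s : ℝ≥0∞) ^ p ≤ L * (f t / (t : ℝ≥0∞) ^ p)

def IsADec (f : ℝ≥0 → ℝ≥0∞) (q : ℝ) (L : ℝ≥0) : Prop :=
  ∀ s t : ℝ≥0, 0 < s → s ≤ t → f t / (t : ℝ≥0∞) ^ q ≤ L * (f s / (s : ℝ≥0∞) ^ q)

lemma ENNReal.le_coe_mul_div_rpow_mul {a b : ℝ≥0∞} {c s t : ℝ≥0} {r : ℝ} (hr : 0 ≤ r)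
    (hs : 0 < s) (ht : 0 < t) (h : a / (s : ℝ≥0∞) ^ r ≤ c * (b / (t : ℝ≥0∞) ^ r)) :
    a ≤ ↑(c * (s / t) ^ r) * b := by
  have hsr0 : (s : ℝ≥0∞) ^ r ≠ 0 := (ENNReal.rpow_pos (by exact_mod_cast hs) coe_ne_top).ne'
  have hsrtop : (s : ℝ≥0∞) ^ r ≠ ∞ := ENNReal.rpow_ne_top_of_nonneg hr coe_ne_top
  calc a = a / (s : ℝ≥0∞) ^ r * (s : ℝ≥0∞) ^ r := (ENNReal.div_mul_cancel hsr0 hsrtop).symm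
    _ ≤ c * (b / (t : ℝ≥0∞) ^ r) * (s : ℝ≥0∞) ^ r := by gcongr
    _ = ↑(c * (s / t) ^ r) * b := by
      rw [coe_mul, coe_rpow_of_nonneg _ hr, coe_div ht.ne', div_rpow_of_nonneg _ _ hr,
        div_eq_mul_inv, div_eq_mul_inv]
      ring

section AlmostMonotone

variable {f : ℝ≥0 → ℝ≥0∞} {p q : ℝ} {L : ℝ≥0} {β s t : ℝ≥0}

lemma IsAInc.le_mul_div (hf : IsAInc f p L) (hp : 0 ≤ p) (hs : 0 < s) (hst : s ≤ t) :
    f s ≤ ↑(L * (s / t) ^ p) * f t :=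
  ENNReal.le_coe_mul_div_rpow_mul hp hs (hs.trans_le hst) (hf s t hs hst)

lemma IsADec.le_mul_div (hf : IsADec f q L) (hq : 0 ≤ q) (hs : 0 < s) (hst : s ≤ t) :
    f t ≤ ↑(L * (t / s) ^ q) * f s :=
  ENNReal.le_coe_mul_div_rpow_mul hq (hs.trans_le hst) hs (hf s t hs hst)

lemma IsAInc.le_of_le (hf : IsAInc f 1 L) (hfβ : f β ≤ 1) (ht : 0 < t) (htβ : t ≤ β) :
    f t ≤ L := by
  have hratio : t / β ≤ 1 := div_le_one_of_le₀ htβ zero_le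
  calc f t ≤ ↑(L * (t / β) ^ (1 : ℝ)) * f β := hf.le_mul_div zero_le_one ht htβ
    _ ≤ ↑(L * 1) * 1 := by rw [NNReal.rpow_one]; gcongr
    _ = L := by simp

lemma IsADec.le_of_le_of_le_one (hf : IsADec f q L) (hq : 0 ≤ q) (hfβ : f β ≤ 1)
    (hβ : 0 < β) (hβt : β ≤ t) (ht : t ≤ 1) : f t ≤ ↑(L * β⁻¹ ^ q) := by
  have hratio : t / β ≤ β⁻¹ := by
    rw [div_eq_mul_inv]
    exact mul_le_of_le_one_left zero_le ht
  calc f t ≤ ↑(L * (t / β) ^ q) * f β := hf.le_mul_div hq hβ hβt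
    _ ≤ ↑(L * β⁻¹ ^ q) * 1 := by gcongr
    _ = ↑(L * β⁻¹ ^ q) := mul_one _

lemma IsADec.le_mul_mul (hf : IsADec f q L) (hq : 0 ≤ q) (hβ : 0 < β) (hβ1 : β ≤ 1)
    (ht : 0 < t) : f t ≤ ↑(L * β⁻¹ ^ q) * f (β * t) := by
  have hratio : t / (β * t) = β⁻¹ := by field_simp
  simpa only [hratio] using
    hf.le_mul_div hq (mul_pos hβ ht) (mul_le_of_le_one_left zero_le hβ1)

lemma le_of_le_one_of_isAInc_of_isADec {β₀ L₁ : ℝ≥0} (hf0 : f 0 = 0) (hinc : IsAInc f 1 L)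
    (hdec : IsADec f q L₁) (hq : 0 ≤ q) (hβ₀ : 0 < β₀) (hfβ₀ : f β₀ ≤ 1) (ht : t ≤ 1) :
    f t ≤ ↑(L + L₁ * β₀⁻¹ ^ q) := by
  rcases eq_zero_or_pos t with rfl | ht0
  · simp [hf0]
  rcases le_total t β₀ with htβ | hβt
  · calc f t ≤ L := hinc.le_of_le hfβ₀ ht0 htβ
      _ ≤ ↑(L + L₁ * β₀⁻¹ ^ q) := by gcongr; exact le_self_add
  · calc f t ≤ ↑(L₁ * β₀⁻¹ ^ q) := hdec.le_of_le_of_le_one hq hfβ₀ hβ₀ hβt ht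
      _ ≤ ↑(L + L₁ * β₀⁻¹ ^ q) := by gcongr; exact le_add_self

lemma le_mul_add_one_of_isAInc_of_isADec {g : ℝ≥0 → ℝ≥0∞} {T : ℝ≥0∞} {β₀ β₁ L₁ : ℝ≥0}
    (hf0 : f 0 = 0) (hinc : IsAInc f 1 L) (hdec : IsADec f q L₁) (hq : 0 ≤ q)
    (hβ₀ : 0 < β₀) (hfβ₀ : f β₀ ≤ 1) (hβ₁0 : 0 < β₁) (hβ₁1 : β₁ ≤ 1)
    (hfg : ∀ t : ℝ≥0, 1 ≤ t → (t : ℝ≥0∞) ≤ T → f (β₁ * t) ≤ g t) (ht : (t : ℝ≥0∞) ≤ T) :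
    f t ≤ ↑(L + L₁ * β₀⁻¹ ^ q + L₁ * β₁⁻¹ ^ q) * (g t + 1) := by
  rcases le_total t 1 with ht1 | ht1
  · calc f t ≤ ↑(L + L₁ * β₀⁻¹ ^ q) :=
          le_of_le_one_of_isAInc_of_isADec hf0 hinc hdec hq hβ₀ hfβ₀ ht1
      _ ≤ ↑(L + L₁ * β₀⁻¹ ^ q + L₁ * β₁⁻¹ ^ q) * 1 := by
          rw [mul_one]; exact coe_le_coe.mpr le_self_add
      _ ≤ _ := by gcongr; exact le_add_self
  · calc f t ≤ ↑(L₁ * β₁⁻¹ ^ q) * f (β₁ * t) :=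
          hdec.le_mul_mul hq hβ₁0 hβ₁1 (one_pos.trans_le ht1)
      _ ≤ ↑(L + L₁ * β₀⁻¹ ^ q + L₁ * β₁⁻¹ ^ q) * (g t + 1) := by
          gcongr
          · exact le_add_self
          · exact (hfg t ht1 ht).trans le_self_add

end AlmostMonotone

lemma essSup_le_mul_essInf_add_one {α : Type*} [MeasurableSpace α] {μ : Measure α}
    {f : α → ℝ≥0∞} {C : ℝ≥0∞} (hC : C ≠ 0) (h : ∀ᵐ x ∂μ, ∀ᵐ y ∂μ, f x ≤ C * (f y + 1)) :
    essSup f μ ≤ C * (essInf f μ + 1) := by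
  refine essSup_le_of_ae_le _ ?_
  filter_upwards [h] with x hx
  have hdiv : f x / C - 1 ≤ essInf f μ := by
    refine le_essInf_of_ae_le _ ?_
    filter_upwards [hx] with y hy
    exact tsub_le_iff_right.mpr (ENNReal.div_le_of_le_mul' hy)
  have : f x / C ≤ essInf f μ + 1 := tsub_le_iff_right.mp hdiv
  rw [ENNReal.div_le_iff_le_mul (Or.inl hC) (Or.inr (by simp))] at this
  rwa [mul_comm]

theorem statement9_general (n : ℕ) (q : ℝ) (β₀ β₁ L L₁ : ℝ≥0) (hq : 1 ≤ q)
    (hβ₀0 : 0 < β₀) (hβ₁0 : 0 < β₁) (hβ₁1 : β₁ < 1) (hL : 1 ≤ L) :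
    ∃ C : ℝ≥0, 1 ≤ C ∧
      ∀ (Ω : Set (Fin n → ℝ)) (φ : (Fin n → ℝ) → ℝ≥0 → ℝ≥0∞),
        BoundedDomain Ω → IsWeakPhi Ω φ L → PhiA0 Ω φ β₀ → PhiA1n Ω φ β₁ →
        PhiADec Ω φ q L₁ →
        ∀ (z : Fin n → ℝ) (ρ : ℝ), 0 < ρ →
          volume (Metric.ball z ρ) ≤ 1 → 0 < volume (Metric.ball z ρ ∩ Ω) →
          ∀ t : ℝ≥0,
            (t : ℝ≥0∞) ≤ (volume (Metric.ball z ρ)) ^ (-(1 / (n : ℝ))) →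
            essSup (fun x => φ x t) (volume.restrict (Metric.ball z ρ ∩ Ω)) ≤
              (C : ℝ≥0∞) *
                (essInf (fun x => φ x t) (volume.restrict (Metric.ball z ρ ∩ Ω)) + 1) := by
  have hq0 : 0 ≤ q := zero_le_one.trans hq
  have hC : 1 ≤ L + L₁ * β₀⁻¹ ^ q + L₁ * β₁⁻¹ ^ q := hL.trans (le_self_add.trans le_self_add)
  refine ⟨_, hC, fun Ω φ hΩ hφ hA0 hA1n hADec z ρ hρ _ _ t ht => ?_⟩
  have hS : MeasurableSet (Metric.ball z ρ ∩ Ω) := (isOpen_ball.inter hΩ.1).measurableSet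
  refine essSup_le_mul_essInf_add_one (by exact_mod_cast (one_pos.trans_le hC).ne') ?_
  filter_upwards [ae_restrict_mem hS, ae_restrict_of_ae hA0, ae_restrict_of_ae hADec,
    ae_restrict_of_ae (hA1n z ρ hρ)] with x hxS hxA0 hxADec hxA1n
  filter_upwards [ae_restrict_mem hS, ae_restrict_of_ae hxA1n] with y hyS hxyA1n
  exact le_mul_add_one_of_isAInc_of_isADec (hφ.1.2.2.1 x hxS.2) (hφ.2.2.1 x hxS.2)
    (hxADec hxS.2) hq0 hβ₀0 (hxA0 hxS.2).1 hβ₁0 hβ₁1.le (hxyA1n hxS hyS) ht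

/-- Let `Ω ⊂ ℝⁿ` be a bounded domain and `φ ∈ Φ_w(Ω)` satisfy
`(A0)`, `(A1-n)` and `(aDec)_q`. Then there is `C ≥ 1`, depending only on `n` and
the constants in `(A0)`, `(A1-n)`, `(aDec)_q` and `(aInc)_1`, such that for every
ball `B` with `|B| ≤ 1` and `|B ∩ Ω| > 0` and every `t ∈ [0, |B|^{-1/n}]`,
one has `φ_B⁺(t) ≤ C (φ_B⁻(t) + 1)`. -/
theorem statement9 (n : ℕ) (q : ℝ) (β₀ β₁ L L₁ : ℝ≥0) (hq : 1 ≤ q)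
    (hβ₀0 : 0 < β₀) (hβ₀1 : β₀ ≤ 1) (hβ₁0 : 0 < β₁) (hβ₁1 : β₁ < 1)
    (hL : 1 ≤ L) (hL₁ : 1 ≤ L₁) :
    ∃ C : ℝ≥0, 1 ≤ C ∧
      ∀ (Ω : Set (Fin n → ℝ)) (φ : (Fin n → ℝ) → ℝ≥0 → ℝ≥0∞),
        BoundedDomain Ω → IsWeakPhi Ω φ L → PhiA0 Ω φ β₀ → PhiA1n Ω φ β₁ →
        PhiADec Ω φ q L₁ →
        ∀ (z : Fin n → ℝ) (ρ : ℝ), 0 < ρ →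
          volume (Metric.ball z ρ) ≤ 1 → 0 < volume (Metric.ball z ρ ∩ Ω) →
          ∀ t : ℝ≥0,
            (t : ℝ≥0∞) ≤ (volume (Metric.ball z ρ)) ^ (-(1 / (n : ℝ))) →
            essSup (fun x => φ x t) (volume.restrict (Metric.ball z ρ ∩ Ω)) ≤
              (C : ℝ≥0∞) *
                (essInf (fun x => φ x t) (volume.restrict (Metric.ball z ρ ∩ Ω)) + 1) :=
  statement9_general n q β₀ β₁ L L₁ hq hβ₀0 hβ₁0 hβ₁1 hL
end
end

section
/- Let n ≥ 1, q > 1, c₁ > 0 and λ ≥ 0. Let Q_r ⊂ ℝⁿ be a cube of side length r > 0 with faces parallel to the coordinate axes, and for σ ≤ r let Q_σ denote the concentric cube of side σ. Suppose u ∈ L^∞(Q_r) satisfies, for all σ, τ with r/2 ≤ σ < τ ≤ r, the estimate ess sup_{Q_σ} u₊ ≤ c₁·[(1 − σ/τ)^{−4nq²}·(⨍_{Q_τ} u₊^q dx)^{1/q} + λ]. Then for every h ∈ (0,∞) there exists a constant C, depending only on n, q, h and c₁, such that ess sup_{Q_{r/2}} u₊ ≤ C·[(⨍_{Q_r} u₊^h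 dx)^{1/h} + λ]. -/
open MeasureTheory Set Filter

noncomputable section

/-- The closed axis-parallel cube with center `z` and side length `s`. -/
def cube {n : ℕ} (z : Fin n → ℝ) (s : ℝ) : Set (Fin n → ℝ) :=
  {y | ∀ i, |y i - z i| ≤ s / 2}

lemma geomSumLe {c : ℝ} (h0 : 0 ≤ c) (h1 : c < 1) (N : ℕ) :
    ∑ i ∈ Finset.range N, c ^ i ≤ (1 - c)⁻¹ := by
  have hc : 0 < 1 - c := by linarith
  have h2 : (∑ i ∈ Finset.range N, c ^ i) * (c - 1) = c ^ N - 1 := geom_sum_mul c N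
  have h3 : (0:ℝ) ≤ c ^ N := pow_nonneg h0 N
  rw [inv_eq_one_div, le_div_iff₀ hc]
  nlinarith

lemma youngAux {θ K : ℝ} (hθ : 0 < θ) (hθ1 : θ < 1) (hK : 0 < K) {a b : ℝ}
    (ha : 0 ≤ a) (hb : 0 ≤ b) :
    K * (a ^ (1 - θ) * b ^ θ) ≤ a / 2 + (K ^ (1/θ) * 2 ^ ((1 - θ)/θ)) * b := by
  set c : ℝ := K ^ (1/θ) * 2 ^ ((1-θ)/θ) with hc
  have hc0 : 0 < c := by positivity
  have hcθ : c ^ θ = K * 2 ^ (1-θ) := by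
    rw [hc, Real.mul_rpow (by positivity) (by positivity), ← Real.rpow_mul hK.le,
      ← Real.rpow_mul (by norm_num : (0:ℝ) ≤ 2), one_div_mul_cancel hθ.ne',
      div_mul_cancel₀ _ hθ.ne', Real.rpow_one]
  have h2pos : (0:ℝ) < 2 ^ (1-θ) := Real.rpow_pos_of_pos (by norm_num) _
  have h1 : (a/2) ^ (1-θ) * (c*b) ^ θ = K * (a ^ (1-θ) * b ^ θ) := by
    rw [Real.mul_rpow hc0.le hb, Real.div_rpow ha (by norm_num), hcθ]
    have h2 : (2:ℝ) ^ ((1:ℝ)-θ) ≠ 0 := h2pos.ne'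
    field_simp
  have h2 := Real.geom_mean_le_arith_mean2_weighted (by linarith : (0:ℝ) ≤ 1-θ) hθ.le
    (by positivity : (0:ℝ) ≤ a/2) (by positivity : (0:ℝ) ≤ c*b) (by ring)
  rw [h1] at h2
  nlinarith [mul_nonneg hc0.le hb]

lemma iterationAux {β : ℝ} (hβ : 0 < β) :
    ∃ C : ℝ, 0 < C ∧ ∀ (M A B r : ℝ) (f : ℝ → ℝ), 0 ≤ A → 0 ≤ B → 0 < r →
      (∀ σ, r / 2 ≤ σ → σ ≤ r → f σ ≤ M) →
      (∀ σ τ, r / 2 ≤ σ → σ < τ → τ ≤ r → f σ ≤ f τ / 2 + A * (1 - σ / τ) ^ (-β) + B) →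
      f (r / 2) ≤ C * (A + B) := by
  set lam : ℝ := (3/4 : ℝ) ^ (1/β) with hlamdef
  have hlam0 : 0 < lam := Real.rpow_pos_of_pos (by norm_num) _
  have hlam1 : lam < 1 :=
    Real.rpow_lt_one (by norm_num) (by norm_num) (by positivity)
  have hlamβ : lam ^ β = 3/4 := by
    rw [hlamdef, ← Real.rpow_mul (by norm_num : (0:ℝ) ≤ 3/4), one_div_mul_cancel hβ.ne',
      Real.rpow_one]
  set D : ℝ := ((1 - lam)/2) ^ (-β) with hDdef
  have h1lam : 0 < (1 - lam)/2 := by linarith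
  have hD0 : 0 < D := Real.rpow_pos_of_pos h1lam _
  refine ⟨3 * D + 2, by positivity, ?_⟩
  intro M A B r f hA hB hr hbd hrec
  set σ : ℕ → ℝ := fun i => r - r/2 * lam ^ i with hσdef
  have hσ0 : σ 0 = r / 2 := by simp [hσdef]; ring
  have hge : ∀ i, r/2 ≤ σ i := by
    intro i
    have : lam ^ i ≤ 1 := pow_le_one₀ hlam0.le hlam1.le
    have : r/2 * lam ^ i ≤ r/2 * 1 := by
      apply mul_le_mul_of_nonneg_left this (by linarith)
    simp only [hσdef]; linarith
  have hle : ∀ i, σ i ≤ r := by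
    intro i
    have : 0 ≤ r/2 * lam ^ i := by positivity
    simp only [hσdef]; linarith
  have hmono : ∀ i, σ i < σ (i+1) := by
    intro i
    have := pow_lt_pow_right_of_lt_one₀ hlam0 hlam1 (Nat.lt_succ_self i)
    have : r/2 * lam ^ (i+1) < r/2 * lam ^ i := by
      apply mul_lt_mul_of_pos_left this (by linarith)
    simp only [hσdef]; linarith
  have hpow43 : ∀ i : ℕ, (lam ^ i * ((1 - lam)/2)) ^ (-β) = D * (4/3) ^ i := by
    intro i
    rw [Real.mul_rpow (by positivity) h1lam.le, mul_comm]
    congr 1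
    rw [← Real.rpow_natCast lam i, ← Real.rpow_mul hlam0.le, mul_comm (i:ℝ) (-β),
      Real.rpow_mul hlam0.le, Real.rpow_neg hlam0.le, Real.rpow_natCast, hlamβ]
    norm_num
  have key : ∀ i, f (σ i) ≤ f (σ (i+1)) / 2 + (A * D) * (4/3) ^ i + B := by
    intro i
    have h1 := hrec (σ i) (σ (i+1)) (hge i) (hmono i) (hle (i+1))
    have hs1 : 0 < σ (i+1) := lt_of_lt_of_le (by positivity) (hge (i+1))
    have ht : lam ^ i * ((1 - lam)/2) ≤ 1 - σ i / σ (i+1) := by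
      rw [show (1 : ℝ) - σ i / σ (i+1) = (σ (i+1) - σ i) / σ (i+1) by field_simp]
      have hnum : σ (i+1) - σ i = r/2 * (lam ^ i * (1 - lam)) := by
        simp only [hσdef]; ring
      rw [hnum, le_div_iff₀ hs1]
      calc lam ^ i * ((1-lam)/2) * σ (i+1) ≤ lam ^ i * ((1-lam)/2) * r := by
            apply mul_le_mul_of_nonneg_left (hle _) (by positivity)
        _ = r/2 * (lam ^ i * (1 - lam)) := by ring
    have htpos : 0 < lam ^ i * ((1 - lam)/2) := by positivity
    have hre : (1 - σ i / σ (i+1)) ^ (-β) ≤ (lam ^ i * ((1 - lam)/2)) ^ (-β) := by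
      rw [Real.rpow_neg (by linarith : (0:ℝ) ≤ 1 - σ i / σ (i+1)),
        Real.rpow_neg htpos.le]
      apply inv_anti₀ (Real.rpow_pos_of_pos htpos _)
      exact Real.rpow_le_rpow htpos.le ht hβ.le
    rw [hpow43 i] at hre
    have := mul_le_mul_of_nonneg_left hre hA
    calc f (σ i) ≤ f (σ (i+1)) / 2 + A * (1 - σ i / σ (i+1)) ^ (-β) + B := h1
      _ ≤ f (σ (i+1)) / 2 + (A * D) * (4/3) ^ i + B := by rw [mul_assoc]; linarith
  have main : ∀ N, f (σ 0) ≤ (1/2)^N * f (σ N) +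
      ∑ i ∈ Finset.range N, (1/2:ℝ)^i * ((A*D) * (4/3) ^ i + B) := by
    intro N
    induction N with
    | zero => simp
    | succ N ih =>
      have h1 := key N
      have h2 : (1/2:ℝ)^N * f (σ N) ≤
          (1/2:ℝ)^N * (f (σ (N+1)) / 2 + (A*D) * (4/3) ^ N + B) :=
        mul_le_mul_of_nonneg_left h1 (by positivity)
      calc f (σ 0) ≤ (1/2)^N * f (σ N) +
            ∑ i ∈ Finset.range N, (1/2:ℝ)^i * ((A*D) * (4/3) ^ i + B) := ih
        _ ≤ (1/2:ℝ)^N * (f (σ (N+1)) / 2 + (A*D) * (4/3) ^ N + B) +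
            ∑ i ∈ Finset.range N, (1/2:ℝ)^i * ((A*D) * (4/3) ^ i + B) := by linarith
        _ = (1/2)^(N+1) * f (σ (N+1)) +
            ∑ i ∈ Finset.range (N+1), (1/2:ℝ)^i * ((A*D) * (4/3) ^ i + B) := by
            rw [Finset.sum_range_succ]; ring
  have sumbd : ∀ N, ∑ i ∈ Finset.range N, (1/2:ℝ)^i * ((A*D) * (4/3) ^ i + B)
      ≤ 3*(A*D) + 2*B := by
    intro N
    have hterm : ∀ i : ℕ, (1/2:ℝ)^i * ((A*D)*(4/3)^i + B) = (A*D)*(2/3)^i + B*(1/2)^i := by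
      intro i
      rw [show ((2:ℝ)/3) = (1/2)*(4/3) by norm_num, mul_pow]
      ring
    rw [Finset.sum_congr rfl fun i _ => hterm i, Finset.sum_add_distrib,
      ← Finset.mul_sum, ← Finset.mul_sum]
    have g1 := geomSumLe (by norm_num : (0:ℝ) ≤ 2/3) (by norm_num) N
    have g2 := geomSumLe (by norm_num : (0:ℝ) ≤ 1/2) (by norm_num) N
    norm_num at g1 g2
    have := mul_le_mul_of_nonneg_left g1 (mul_nonneg hA hD0.le)
    have := mul_le_mul_of_nonneg_left g2 hB
    nlinarith
  have hM : ∀ N : ℕ, f (σ 0) ≤ (1/2:ℝ)^N * M + (3*(A*D) + 2*B) := by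
    intro N
    refine (main N).trans (add_le_add ?_ (sumbd N))
    exact mul_le_mul_of_nonneg_left (hbd _ (hge N) (hle N)) (by positivity)
  have hlim : Tendsto (fun N : ℕ => (1/2:ℝ)^N * M + (3*(A*D)+2*B)) atTop
      (nhds (0 * M + (3*(A*D)+2*B))) :=
    (((tendsto_pow_atTop_nhds_zero_of_lt_one (by norm_num) (by norm_num)).mul_const M).add_const _)
  have hfin : f (σ 0) ≤ 0 * M + (3*(A*D)+2*B) := ge_of_tendsto' hlim hM
  rw [hσ0] at hfin
  nlinarith [mul_nonneg hD0.le hB, mul_nonneg hA hD0.le]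

lemma cube_eq {n : ℕ} (z : Fin n → ℝ) (s : ℝ) :
    cube z s = Set.pi Set.univ fun i => Icc (z i - s/2) (z i + s/2) := by
  ext y
  simp only [cube, mem_setOf_eq, Set.mem_pi, Set.mem_univ, mem_Icc, abs_le, true_implies]
  constructor
  · intro h i; obtain ⟨h1, h2⟩ := h i; constructor <;> linarith
  · intro h i; obtain ⟨h1, h2⟩ := h i; constructor <;> linarith

lemma cube_subset {n : ℕ} (z : Fin n → ℝ) {s t : ℝ} (hst : s ≤ t) : cube z s ⊆ cube z t :=
  fun y hy i => (hy i).trans (by linarith)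

lemma volume_cube {n : ℕ} (z : Fin n → ℝ) {s : ℝ} (hs : 0 ≤ s) :
    volume (cube z s) = ENNReal.ofReal (s ^ n) := by
  rw [cube_eq, volume_pi_pi]
  simp only [Real.volume_Icc, show ∀ i : Fin n, z i + s/2 - (z i - s/2) = s from fun i => by ring]
  rw [Finset.prod_const, Finset.card_univ, Fintype.card_fin, ← ENNReal.ofReal_pow hs]

set_option maxHeartbeats 1000000 in
/-- Let `n ≥ 1`, `q > 1`, `c₁ > 0`. Suppose `u ∈ L^∞(Q_r)`
satisfies, for all `r/2 ≤ σ < τ ≤ r`,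
`ess sup_{Q_σ} u₊ ≤ c₁ ((1 − σ/τ)^{−4nq²} (⨍_{Q_τ} u₊^q)^{1/q} + λ)`.
Then for every `h > 0` there is `C = C(n,q,h,c₁)` with
`ess sup_{Q_{r/2}} u₊ ≤ C ((⨍_{Q_r} u₊^h)^{1/h} + λ)`. -/
theorem statement11 (n : ℕ) (q c₁ h : ℝ) (hn : 1 ≤ n) (hq : 1 < q)
    (hc₁ : 0 < c₁) (hh : 0 < h) :
    ∃ C : ℝ, 0 < C ∧
      ∀ (z : Fin n → ℝ) (r lam : ℝ) (u : (Fin n → ℝ) → ℝ),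
        0 < r → 0 ≤ lam →
        AEMeasurable u (volume.restrict (cube z r)) →
        (∃ M : ℝ, ∀ᵐ x ∂(volume.restrict (cube z r)), |u x| ≤ M) →
        (∀ σ τ : ℝ, r / 2 ≤ σ → σ < τ → τ ≤ r →
          essSup (fun x => max (u x) 0) (volume.restrict (cube z σ)) ≤
            c₁ * ((1 - σ / τ) ^ (-(4 * (n : ℝ) * q ^ 2)) *
              ((∫ x in cube z τ, (max (u x) 0) ^ q) / (volume (cube z τ)).toReal) ^ (1 / q)
              + lam)) →
        essSup (fun x => max (u x) 0) (volume.restrict (cube z (r / 2))) ≤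
          C * (((∫ x in cube z r, (max (u x) 0) ^ h) / (volume (cube z r)).toReal) ^ (1 / h)
            + lam) := by
  have hq0 : (0:ℝ) < q := by linarith
  have hn0 : (0:ℝ) < (n:ℝ) := by exact_mod_cast Nat.lt_of_lt_of_le Nat.zero_lt_one hn
  set p : ℝ := min h (q/2) with hpdef
  have hp0 : 0 < p := lt_min hh (by positivity)
  have hpq : p < q := lt_of_le_of_lt (min_le_right _ _) (by linarith)
  have hph : p ≤ h := min_le_left _ _
  set θ : ℝ := p / q with hθdef
  have hθ0 : 0 < θ := by positivity
  have hθ1 : θ < 1 := (div_lt_one hq0).2 hpq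
  set α : ℝ := 4 * (n:ℝ) * q^2 with hαdef
  have hα : (0:ℝ) < α := by positivity
  set β : ℝ := α / θ with hβdef
  have hβ : 0 < β := by positivity
  obtain ⟨Cit, hCit, Hit⟩ := iterationAux hβ
  set K : ℝ := c₁ * 2 ^ ((n:ℝ)/q) with hKdef
  have hK : 0 < K := by positivity
  set CY : ℝ := K ^ (1/θ) * 2 ^ ((1-θ)/θ) with hCYdef
  have hCY : 0 < CY := by positivity
  refine ⟨Cit * (CY + c₁), by positivity, ?_⟩
  intro z r lam u hr hlam hmeas hbdd hhyp
  obtain ⟨M, hM⟩ := hbdd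
  set g : (Fin n → ℝ) → ℝ := fun x => max (u x) 0 with hgdef
  have hgnn : ∀ x, 0 ≤ g x := fun x => le_max_right _ _
  set M' : ℝ := max M 0 with hM'def
  have hM'0 : 0 ≤ M' := le_max_right _ _
  have hrn : (0:ℝ) < r ^ n := pow_pos hr n
  have hres : ∀ {s t : ℝ}, s ≤ t →
      volume.restrict (cube z s) ≤ volume.restrict (cube z t) :=
    fun hst => Measure.restrict_mono (cube_subset z hst) le_rfl
  have hfinm : ∀ {s : ℝ}, 0 ≤ s → IsFiniteMeasure (volume.restrict (cube z s)) := by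
    intro s hs
    refine ⟨?_⟩
    rw [Measure.restrict_apply_univ, volume_cube z hs]
    exact ENNReal.ofReal_lt_top
  have hne : ∀ {s : ℝ}, 0 < s → (volume.restrict (cube z s)) ≠ 0 := by
    intro s hs hcon
    have h1 : volume (cube z s) = 0 := by
      rw [← Measure.restrict_apply_univ, hcon]; simp
    rw [volume_cube z hs.le, ENNReal.ofReal_eq_zero] at h1
    nlinarith [pow_pos hs n]
  have haes : ∀ {s : ℝ}, s ≤ r → (∀ᵐ x ∂(volume.restrict (cube z s)), g x ≤ M') := by
    intro s hs
    have h1 : ∀ᵐ x ∂(volume.restrict (cube z r)), g x ≤ M' := hM.mono fun x hx =>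
      max_le ((le_abs_self _).trans (hx.trans (le_max_left M 0))) (le_max_right M 0)
    exact h1.filter_mono (ae_mono (hres hs))
  have hgm : ∀ {s : ℝ}, s ≤ r → AEMeasurable g (volume.restrict (cube z s)) :=
    fun hs => (hmeas.mono_measure (hres hs)).max aemeasurable_const
  have hFle : ∀ {s : ℝ}, 0 < s → s ≤ r →
      essSup g (volume.restrict (cube z s)) ≤ M' := by
    intro s hs hsr
    haveI := ae_neBot.2 (hne hs)
    have hb : IsBoundedUnder (· ≥ ·) (ae (volume.restrict (cube z s))) g :=
      ⟨0, eventually_map.2 (Eventually.of_forall hgnn)⟩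
    exact limsup_le_of_le hb.isCoboundedUnder_le (haes hsr)
  have hF0 : ∀ {s : ℝ}, 0 < s → s ≤ r →
      0 ≤ essSup g (volume.restrict (cube z s)) := by
    intro s hs hsr
    haveI := ae_neBot.2 (hne hs)
    exact le_limsup_of_frequently_le ((Eventually.of_forall hgnn).frequently)
      ⟨M', eventually_map.2 (haes hsr)⟩
  have hFae : ∀ {s : ℝ}, s ≤ r →
      ∀ᵐ x ∂(volume.restrict (cube z s)),
        g x ≤ essSup g (volume.restrict (cube z s)) := by
    intro s hsr
    exact ae_le_essSup ⟨M', eventually_map.2 (haes hsr)⟩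
  have hint : ∀ {s e : ℝ}, 0 ≤ s → s ≤ r → 0 ≤ e →
      Integrable (fun x => g x ^ e) (volume.restrict (cube z s)) := by
    intro s e hs hsr he
    haveI := hfinm hs
    have h1 := hgm hsr
    have h2 : AEMeasurable (fun x => g x ^ e) (volume.restrict (cube z s)) := by fun_prop
    refine Integrable.mono' (integrable_const (M' ^ e)) h2.aestronglyMeasurable ?_
    filter_upwards [haes hsr] with x hx
    rw [Real.norm_of_nonneg (Real.rpow_nonneg (hgnn x) _)]
    exact Real.rpow_le_rpow (hgnn x) hx he
  have hvr : (volume (cube z r)).toReal = r ^ n := by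
    rw [volume_cube z hr.le, ENNReal.toReal_ofReal (by positivity)]
  set P : ℝ := (∫ x in cube z r, g x ^ p) / r ^ n with hPdef
  have hintp : 0 ≤ ∫ x in cube z r, g x ^ p :=
    integral_nonneg fun x => Real.rpow_nonneg (hgnn x) _
  have hP0 : 0 ≤ P := div_nonneg hintp hrn.le
  set Y : ℝ := P ^ (1/p) with hYdef
  have hY0 : 0 ≤ Y := Real.rpow_nonneg hP0 _
  -- the recursion
  have hrec : ∀ σ τ : ℝ, r/2 ≤ σ → σ < τ → τ ≤ r →
      essSup g (volume.restrict (cube z σ)) ≤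
        essSup g (volume.restrict (cube z τ)) / 2 + (CY * Y) * (1 - σ/τ) ^ (-β) + c₁ * lam := by
    intro σ τ hσ hστ hτ
    have hσp : 0 < σ := lt_of_lt_of_le (by positivity) hσ
    have hτp : 0 < τ := hσp.trans hστ
    have h0 := hhyp σ τ hσ hστ hτ
    set Fτ := essSup g (volume.restrict (cube z τ)) with hFτdef
    have hFτ0 : 0 ≤ Fτ := hF0 hτp hτ
    have hae1 : ∀ᵐ x ∂(volume.restrict (cube z τ)),
        g x ^ q ≤ Fτ ^ (q - p) * g x ^ p := by
      filter_upwards [hFae hτ] with x hx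
      have h1 : g x ^ q = g x ^ (q - p) * g x ^ p := by
        have h2 : q - p + p = q := by ring
        have h3 := Real.rpow_add' (hgnn x) (y := q - p) (z := p) (by rw [h2]; exact hq0.ne')
        rw [h2] at h3
        exact h3
      rw [h1]
      exact mul_le_mul_of_nonneg_right
        (Real.rpow_le_rpow (hgnn x) hx (by linarith)) (Real.rpow_nonneg (hgnn x) _)
    have hI1 : ∫ x in cube z τ, g x ^ q ≤ Fτ ^ (q - p) * ∫ x in cube z τ, g x ^ p := by
      rw [← integral_const_mul]
      exact integral_mono_ae (hint hτp.le hτ hq0.le) ((hint hτp.le hτ hp0.le).const_mul _) hae1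
    have hI2 : ∫ x in cube z τ, g x ^ p ≤ ∫ x in cube z r, g x ^ p := by
      apply setIntegral_mono_set (hint hr.le le_rfl hp0.le)
        (Eventually.of_forall fun x => Real.rpow_nonneg (hgnn x) _)
        (HasSubset.Subset.eventuallyLE (cube_subset z hτ))
    have hvτ : (volume (cube z τ)).toReal = τ ^ n := by
      rw [volume_cube z hτp.le, ENNReal.toReal_ofReal (by positivity)]
    have hτ2 : r/2 ≤ τ := hσ.trans hστ.le
    have hτn : (r/2) ^ n ≤ τ ^ n := pow_le_pow_left₀ (by positivity) hτ2 n
    have hX : (∫ x in cube z τ, g x ^ q) / (volume (cube z τ)).toReal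
        ≤ Fτ ^ (q - p) * (∫ x in cube z r, g x ^ p) / (r/2) ^ n := by
      rw [hvτ]
      apply div_le_div₀ (mul_nonneg (Real.rpow_nonneg hFτ0 _) hintp)
        (hI1.trans (mul_le_mul_of_nonneg_left hI2 (Real.rpow_nonneg hFτ0 _)))
        (by positivity) hτn
    have hXeq : Fτ ^ (q - p) * (∫ x in cube z r, g x ^ p) / (r/2) ^ n
        = Fτ ^ (q - p) * ((2:ℝ) ^ n * P) := by
      rw [hPdef, div_pow]
      have h2n : ((2:ℝ) ^ n) ≠ 0 := by positivity
      field_simp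
    have hXnn : 0 ≤ (∫ x in cube z τ, g x ^ q) / (volume (cube z τ)).toReal :=
      div_nonneg (integral_nonneg fun x => Real.rpow_nonneg (hgnn x) _) ENNReal.toReal_nonneg
    have hXq : ((∫ x in cube z τ, g x ^ q) / (volume (cube z τ)).toReal) ^ (1/q)
        ≤ Fτ ^ (1-θ) * (2 ^ ((n:ℝ)/q) * Y ^ θ) := by
      have h2 := Real.rpow_le_rpow hXnn (hX.trans_eq hXeq) (by positivity : (0:ℝ) ≤ 1/q)
      refine h2.trans_eq ?_
      rw [Real.mul_rpow (Real.rpow_nonneg hFτ0 _) (by positivity),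
        Real.mul_rpow (by positivity) hP0]
      congr 1
      · rw [← Real.rpow_mul hFτ0]
        congr 1
        rw [hθdef]
        field_simp
      · congr 1
        · rw [← Real.rpow_natCast 2 n, ← Real.rpow_mul (by norm_num : (0:ℝ) ≤ 2), mul_one_div]
        · rw [hYdef, ← Real.rpow_mul hP0]
          congr 1
          rw [hθdef]
          field_simp
    have hstp : 0 < 1 - σ/τ := by
      have : σ/τ < 1 := (div_lt_one hτp).2 hστ
      linarith
    have htpos : 0 < (1 - σ/τ) ^ (-α) := Real.rpow_pos_of_pos hstp _
    have hchain1 : essSup g (volume.restrict (cube z σ)) ≤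
        (K * (1 - σ/τ) ^ (-α)) * (Fτ ^ (1-θ) * Y ^ θ) + c₁ * lam := by
      have h3 : (1 - σ/τ) ^ (-α) *
            ((∫ x in cube z τ, g x ^ q) / (volume (cube z τ)).toReal) ^ (1/q)
          ≤ (1 - σ/τ) ^ (-α) * (Fτ ^ (1-θ) * (2 ^ ((n:ℝ)/q) * Y ^ θ)) :=
        mul_le_mul_of_nonneg_left hXq htpos.le
      have h4 := h0.trans (by
        have := mul_le_mul_of_nonneg_left (add_le_add_left h3 lam) hc₁.le
        exact this)
      calc essSup g (volume.restrict (cube z σ))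
          ≤ c₁ * ((1 - σ/τ) ^ (-α) * (Fτ ^ (1-θ) * (2 ^ ((n:ℝ)/q) * Y ^ θ)) + lam) := h4
        _ = (K * (1 - σ/τ) ^ (-α)) * (Fτ ^ (1-θ) * Y ^ θ) + c₁ * lam := by
            rw [hKdef]; ring
    have hyoung := youngAux hθ0 hθ1 (mul_pos hK htpos) hFτ0 hY0
    have hKt : ((K * (1 - σ/τ) ^ (-α)) ^ (1/θ) * 2 ^ ((1-θ)/θ)) * Y
        = (CY * Y) * (1 - σ/τ) ^ (-β) := by
      rw [Real.mul_rpow hK.le htpos.le, ← Real.rpow_mul hstp.le, hCYdef]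
      have hexp : -α * (1/θ) = -β := by rw [hβdef]; field_simp
      rw [hexp]
      ring
    calc essSup g (volume.restrict (cube z σ))
        ≤ (K * (1 - σ/τ) ^ (-α)) * (Fτ ^ (1-θ) * Y ^ θ) + c₁ * lam := hchain1
      _ ≤ (Fτ / 2 + ((K * (1 - σ/τ) ^ (-α)) ^ (1/θ) * 2 ^ ((1-θ)/θ)) * Y) + c₁ * lam := by
          linarith
      _ = Fτ / 2 + (CY * Y) * (1 - σ/τ) ^ (-β) + c₁ * lam := by rw [hKt]
  -- apply the iteration lemma
  have hmain := Hit M' (CY * Y) (c₁ * lam) r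
    (fun s => essSup g (volume.restrict (cube z s)))
    (by positivity) (by positivity) hr
    (fun s h1 h2 => hFle (lt_of_lt_of_le (by positivity) h1) h2) hrec
  -- step B : Y ≤ Z
  set J : ℝ := ∫ x in cube z r, g x ^ h with hJdef
  have hJ0 : 0 ≤ J := integral_nonneg fun x => Real.rpow_nonneg (hgnn x) _
  have hZnn : 0 ≤ (J / (volume (cube z r)).toReal) ^ (1/h) :=
    Real.rpow_nonneg (div_nonneg hJ0 ENNReal.toReal_nonneg) _
  have hZ : Y ≤ (J / (volume (cube z r)).toReal) ^ (1/h) := by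
    rw [hvr]
    rcases eq_or_lt_of_le hph with hEq | hlt
    · rw [hYdef, hPdef, hJdef, hEq]
    · -- Hölder
      have hP' : 1 < h / p := (one_lt_div hp0).2 hlt
      have hconj := Real.HolderConjugate.conjExponent hP'
      haveI := hfinm hr.le
      have hg1 := hgm (le_refl r)
      have hm1 : MemLp (fun x => g x ^ p) (ENNReal.ofReal (h/p))
          (volume.restrict (cube z r)) := by
        have h2 : AEMeasurable (fun x => g x ^ p) (volume.restrict (cube z r)) := by fun_prop
        refine MemLp.of_bound h2.aestronglyMeasurable (M' ^ p) ?_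
        filter_upwards [haes (le_refl r)] with x hx
        rw [Real.norm_of_nonneg (Real.rpow_nonneg (hgnn x) _)]
        exact Real.rpow_le_rpow (hgnn x) hx hp0.le
      have hHolder := integral_mul_le_Lp_mul_Lq_of_nonneg hconj
        (f := fun x => g x ^ p) (g := fun _ => (1:ℝ))
        (Eventually.of_forall fun x => Real.rpow_nonneg (hgnn x) _)
        (Eventually.of_forall fun _ => zero_le_one) hm1 (memLp_const 1)
      simp only [mul_one, Real.one_rpow, integral_const, Measure.restrict_apply_univ,
        smul_eq_mul, measureReal_restrict_apply_univ, measureReal_def] at hHolder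
      rw [hvr] at hHolder
      have hcongr : (∫ x in cube z r, (g x ^ p) ^ (h/p)) = J := by
        rw [hJdef]
        refine integral_congr_ae (Eventually.of_forall fun x => ?_)
        show (g x ^ p) ^ (h/p) = g x ^ h
        rw [← Real.rpow_mul (hgnn x)]
        congr 1
        field_simp
      rw [hcongr] at hHolder
      -- hHolder : ∫ g^p ≤ J ^ (1/(h/p)) * (r^n * 1) ^ (1/q')
      have hq'pos : 0 < Real.conjExponent (h/p) := hconj.symm.pos
      have hq'inv : 1 / Real.conjExponent (h/p) = 1 - p/h := by
        have := hconj.inv_add_inv_eq_one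
        have hph' : (h/p)⁻¹ = p/h := by field_simp
        rw [one_div]
        rw [hph'] at this
        linarith
      have h1hp : 1 / (h/p) = p/h := by field_simp
      rw [h1hp, hq'inv] at hHolder
      have hstep1 : (∫ x in cube z r, g x ^ p) / r ^ n ≤ (J / r ^ n) ^ (p/h) := by
        have hrr : J ^ (p/h) * (r ^ n) ^ (1 - p/h) / r ^ n = (J / r ^ n) ^ (p/h) := by
          rw [Real.div_rpow hJ0 hrn.le, Real.rpow_sub hrn, Real.rpow_one]
          have hne1 : ((r:ℝ) ^ n) ^ (p/h) ≠ 0 := by positivity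
          field_simp
        rw [← hrr]
        gcongr
      have hstep2 := Real.rpow_le_rpow (div_nonneg hintp hrn.le) hstep1
        (by positivity : (0:ℝ) ≤ 1/p)
      rw [hYdef, hPdef]
      refine hstep2.trans_eq ?_
      rw [← Real.rpow_mul (div_nonneg hJ0 hrn.le)]
      congr 1
      field_simp
  -- conclude
  have hfinal : Cit * (CY * Y + c₁ * lam) ≤
      Cit * (CY + c₁) * ((J / (volume (cube z r)).toReal) ^ (1/h) + lam) := by
    set Z := (J / (volume (cube z r)).toReal) ^ (1/h)
    have h1 : CY * Y + c₁ * lam ≤ (CY + c₁) * (Z + lam) := by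
      nlinarith [mul_nonneg hCY.le (sub_nonneg.2 hZ), mul_nonneg hCY.le hlam,
        mul_nonneg hc₁.le (hY0.trans hZ)]
    calc Cit * (CY * Y + c₁ * lam) ≤ Cit * ((CY + c₁) * (Z + lam)) :=
          mul_le_mul_of_nonneg_left h1 hCit.le
      _ = Cit * (CY + c₁) * (Z + lam) := by ring
  exact hmain.trans hfinal
end
end

section
/- Let Ω ⊂ ℝⁿ be a bounded domain and φ ∈ Φ_w(Ω). (i) If there exists C ≥ 1 such that 1/C ≤ φ(x,1) ≤ C for a.e. x ∈ Ω, then φ satisfies (A0). (ii) Conversely, if φ satisfies (aDec)_q for some q < ∞ and (A0), then there exists C ≥ 1 such that 1/C ≤ φ(x,1) ≤ C for a.e. x ∈ Ω. -/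
open MeasureTheory Set Filter ENNReal NNReal Metric

noncomputable section

/-!
By `(aInc)_1`, `φ(x,t) ≤ L t φ(x,1)` for `t ≤ 1` and `φ(x,t) ≥ t φ(x,1) / L` for `t ≥ 1`, so
`φ(x,1) ∈ [1/C, C]` gives `(A0)` with `β = 1/(LC)`. Conversely, comparing `t = 1` with `β` and
`1/β` through `(aDec)_q` gives `β^q/L₁ ≤ φ(x,1) ≤ L₁/β^q`.
-/

section AlmostMonotone

variable {f : ℝ≥0 → ℝ≥0∞}

theorem apply_inv_le_one_of_almostIncreasing_div {L C : ℝ≥0}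
    (hf : ∀ s t : ℝ≥0, 0 < s → s ≤ t → f s / s ≤ L * (f t / t))
    (hLC : 1 ≤ L * C) (hC : f 1 ≤ C) : f (L * C)⁻¹ ≤ 1 := by
  have hβ0 : (0 : ℝ≥0) < (L * C)⁻¹ := inv_pos.2 (one_pos.trans_le hLC)
  have hslope : f (L * C)⁻¹ / ((L * C)⁻¹ : ℝ≥0) ≤ L * C := by
    calc f (L * C)⁻¹ / ((L * C)⁻¹ : ℝ≥0)
        ≤ L * (f 1 / (1 : ℝ≥0)) := hf _ 1 hβ0 (inv_le_one_of_one_le₀ hLC)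
      _ ≤ L * C := by rw [ENNReal.coe_one, div_one]; gcongr
  calc f (L * C)⁻¹ = f (L * C)⁻¹ / ((L * C)⁻¹ : ℝ≥0) * ((L * C)⁻¹ : ℝ≥0) :=
        (ENNReal.div_mul_cancel (by exact_mod_cast hβ0.ne') ENNReal.coe_ne_top).symm
    _ ≤ (L * C) * ((L * C)⁻¹ : ℝ≥0) := by gcongr
    _ = 1 := by
      rw [← ENNReal.coe_mul, ← ENNReal.coe_mul, mul_inv_cancel₀ (one_pos.trans_le hLC).ne',
        ENNReal.coe_one]

theorem one_le_apply_of_almostIncreasing_div {L C : ℝ≥0}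
    (hf : ∀ s t : ℝ≥0, 0 < s → s ≤ t → f s / s ≤ L * (f t / t))
    (hLC : 1 ≤ L * C) (hC : (C : ℝ≥0∞)⁻¹ ≤ f 1) : 1 ≤ f (L * C) := by
  have hC0 : (C : ℝ≥0∞) ≠ 0 := by exact_mod_cast right_ne_zero_of_mul (one_pos.trans_le hLC).ne'
  calc (1 : ℝ≥0∞) = C * (C : ℝ≥0∞)⁻¹ := (ENNReal.mul_inv_cancel hC0 ENNReal.coe_ne_top).symm
    _ ≤ C * (f 1 / (1 : ℝ≥0)) := by rw [ENNReal.coe_one, div_one]; gcongr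
    _ ≤ C * (L * (f (L * C) / (L * C : ℝ≥0))) := by gcongr; exact hf 1 _ one_pos hLC
    _ = f (L * C) := by
      rw [← mul_assoc, ← ENNReal.coe_mul, mul_comm C L,
        ENNReal.mul_div_cancel (by exact_mod_cast (one_pos.trans_le hLC).ne') ENNReal.coe_ne_top]

variable {q : ℝ} {L₁ β : ℝ≥0}

theorem apply_one_le_of_almostDecreasing_div_rpow
    (hf : ∀ s t : ℝ≥0, 0 < s → s ≤ t → f t / (t : ℝ≥0∞) ^ q ≤ L₁ * (f s / (s : ℝ≥0∞) ^ q))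
    (hβ0 : 0 < β) (hβ1 : β ≤ 1) (hfβ : f β ≤ 1) : f 1 ≤ ((L₁ * β⁻¹ ^ q : ℝ≥0) : ℝ≥0∞) := by
  calc f 1 = f 1 / ((1 : ℝ≥0) : ℝ≥0∞) ^ q := by rw [ENNReal.coe_one, ENNReal.one_rpow, div_one]
    _ ≤ L₁ * (f β / (β : ℝ≥0∞) ^ q) := hf β 1 hβ0 hβ1
    _ ≤ L₁ * (1 / (β : ℝ≥0∞) ^ q) := by gcongr
    _ = ((L₁ * β⁻¹ ^ q : ℝ≥0) : ℝ≥0∞) := by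
      rw [ENNReal.coe_mul, ENNReal.coe_rpow_of_ne_zero (inv_pos.2 hβ0).ne',
        ENNReal.coe_inv hβ0.ne', ENNReal.inv_rpow, one_div]

theorem inv_le_apply_one_of_almostDecreasing_div_rpow
    (hf : ∀ s t : ℝ≥0, 0 < s → s ≤ t → f t / (t : ℝ≥0∞) ^ q ≤ L₁ * (f s / (s : ℝ≥0∞) ^ q))
    (hL₁ : L₁ ≠ 0) (hβ0 : 0 < β) (hβ1 : β ≤ 1) (hfβ : 1 ≤ f β⁻¹) :
    ((L₁ * β⁻¹ ^ q : ℝ≥0) : ℝ≥0∞)⁻¹ ≤ f 1 := by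
  calc ((L₁ * β⁻¹ ^ q : ℝ≥0) : ℝ≥0∞)⁻¹
      = (L₁ : ℝ≥0∞)⁻¹ * (1 / ((β⁻¹ : ℝ≥0) : ℝ≥0∞) ^ q) := by
        rw [ENNReal.coe_mul, ENNReal.coe_rpow_of_ne_zero (inv_pos.2 hβ0).ne',
          ENNReal.mul_inv (Or.inl (by exact_mod_cast hL₁)) (Or.inl ENNReal.coe_ne_top), one_div]
    _ ≤ (L₁ : ℝ≥0∞)⁻¹ * (f β⁻¹ / ((β⁻¹ : ℝ≥0) : ℝ≥0∞) ^ q) := by gcongr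
    _ ≤ (L₁ : ℝ≥0∞)⁻¹ * (L₁ * (f 1 / ((1 : ℝ≥0) : ℝ≥0∞) ^ q)) := by
        gcongr
        exact hf 1 β⁻¹ one_pos (one_le_inv₀ hβ0 |>.2 hβ1)
    _ = f 1 := by
        rw [ENNReal.inv_mul_cancel_left (by exact_mod_cast hL₁) ENNReal.coe_ne_top,
          ENNReal.coe_one, ENNReal.one_rpow, div_one]

end AlmostMonotone

theorem statement14_general {n : ℕ} (Ω : Set (Fin n → ℝ)) (φ : (Fin n → ℝ) → ℝ≥0 → ℝ≥0∞)
    (L : ℝ≥0) (hφ : IsWeakPhi Ω φ L) :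
    ((∃ C : ℝ≥0, 1 ≤ C ∧ ∀ᵐ x ∂(volume : Measure (Fin n → ℝ)), x ∈ Ω →
        (C : ℝ≥0∞)⁻¹ ≤ φ x 1 ∧ φ x 1 ≤ (C : ℝ≥0∞)) →
      ∃ β : ℝ≥0, 0 < β ∧ β ≤ 1 ∧ PhiA0 Ω φ β) ∧
    (∀ (q : ℝ) (L₁ : ℝ≥0), 1 ≤ q → 1 ≤ L₁ → PhiADec Ω φ q L₁ →
      (∃ β : ℝ≥0, 0 < β ∧ β ≤ 1 ∧ PhiA0 Ω φ β) →
      ∃ C : ℝ≥0, 1 ≤ C ∧ ∀ᵐ x ∂(volume : Measure (Fin n → ℝ)), x ∈ Ω →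
        (C : ℝ≥0∞)⁻¹ ≤ φ x 1 ∧ φ x 1 ≤ (C : ℝ≥0∞)) := by
  obtain ⟨-, hL, hInc, -⟩ := hφ
  constructor
  · rintro ⟨C, hC1, hC⟩
    have hLC : 1 ≤ L * C := one_le_mul hL hC1
    refine ⟨(L * C)⁻¹, inv_pos.2 (one_pos.trans_le hLC), inv_le_one_of_one_le₀ hLC, ?_⟩
    filter_upwards [hC] with x hCx hx
    have hf : ∀ s t : ℝ≥0, 0 < s → s ≤ t → φ x s / s ≤ L * (φ x t / t) := by
      simpa only [ENNReal.rpow_one] using hInc x hx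
    exact ⟨apply_inv_le_one_of_almostIncreasing_div hf hLC (hCx hx).2,
      by simpa only [inv_inv] using one_le_apply_of_almostIncreasing_div hf hLC (hCx hx).1⟩
  · rintro q L₁ hq hL₁ hDec ⟨β, hβ0, hβ1, hA0⟩
    refine ⟨L₁ * β⁻¹ ^ q, one_le_mul hL₁ (one_le_rpow (one_le_inv₀ hβ0 |>.2 hβ1) (by linarith)),
      ?_⟩
    filter_upwards [hA0, hDec] with x hA0x hDecx hx
    exact ⟨inv_le_apply_one_of_almostDecreasing_div_rpow (hDecx hx) (one_pos.trans_le hL₁).ne'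
        hβ0 hβ1 (hA0x hx).2,
      apply_one_le_of_almostDecreasing_div_rpow (hDecx hx) hβ0 hβ1 (hA0x hx).1⟩

/-- Let `Ω ⊂ ℝⁿ` be a bounded domain and `φ ∈ Φ_w(Ω)`.
(i) If there is `C ≥ 1` with `1/C ≤ φ(x,1) ≤ C` for a.e. `x ∈ Ω`, then `φ`
satisfies `(A0)`. (ii) Conversely, if `φ` satisfies `(aDec)_q` for some `q < ∞`
and `(A0)`, then there is `C ≥ 1` with `1/C ≤ φ(x,1) ≤ C` for a.e. `x ∈ Ω`. -/
theorem statement14 {n : ℕ} (Ω : Set (Fin n → ℝ)) (φ : (Fin n → ℝ) → ℝ≥0 → ℝ≥0∞)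
    (L : ℝ≥0) (hΩ : BoundedDomain Ω) (hφ : IsWeakPhi Ω φ L) :
    ((∃ C : ℝ≥0, 1 ≤ C ∧ ∀ᵐ x ∂(volume : Measure (Fin n → ℝ)), x ∈ Ω →
        (C : ℝ≥0∞)⁻¹ ≤ φ x 1 ∧ φ x 1 ≤ (C : ℝ≥0∞)) →
      ∃ β : ℝ≥0, 0 < β ∧ β ≤ 1 ∧ PhiA0 Ω φ β) ∧
    (∀ (q : ℝ) (L₁ : ℝ≥0), 1 ≤ q → 1 ≤ L₁ → PhiADec Ω φ q L₁ →
      (∃ β : ℝ≥0, 0 < β ∧ β ≤ 1 ∧ PhiA0 Ω φ β) →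
      ∃ C : ℝ≥0, 1 ≤ C ∧ ∀ᵐ x ∂(volume : Measure (Fin n → ℝ)), x ∈ Ω →
        (C : ℝ≥0∞)⁻¹ ≤ φ x 1 ∧ φ x 1 ≤ (C : ℝ≥0∞)) :=
  statement14_general Ω φ L hφ
end
end
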